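/- arXiv:0901.3560 — 4 statements merged into one kernel-verified Lean document; each statement's English description precedes it below -/
import Mathlib

section
/- For all φ in the domain of the one-dimensional harmonic oscillator operator -d²/dx² + x² on L²(ℝ), one has ‖x²φ‖² ≤ ‖(-d²/dx² + x²)φ‖² + 2‖φ‖². -/
/-!
Pointwise, `|-φ'' + x²φ|² + 2|φ|² - |x²φ|² = |φ''|² + 2x²|φ'|² + G'` with
`G = 2x|φ|² - x²(|φ|²)'`, so the claim is `∫ G' ≥ 0` up to a nonnegative integral. No decay of `φ'`
is available to kill the boundary terms, but none is needed: the derivative of the integrable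
function `|φ|² ≥ 0` cannot stay positive near `+∞` (nor negative near `-∞`), and at such points
`G ≥ 0` (resp. `G ≤ 0`), which is the sign the boundary terms need.
-/

open MeasureTheory Filter Set
open scoped InnerProductSpace

theorem MeasureTheory.Integrable.frequently_deriv_nonpos_atTop {A : ℝ → ℝ} (hA : Integrable A)
    (hA0 : 0 ≤ A) :
    ∃ᶠ x in atTop, deriv A x ≤ 0 := by
  by_contra h
  simp only [not_frequently, not_le] at h
  obtain ⟨T, hT⟩ := eventually_atTop.mp h
  have hmono : StrictMonoOn A (Ioi T) := by
    refine strictMonoOn_of_deriv_pos (convex_Ioi T) (fun x hx => ?_) fun x hx => ?_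
    · exact (differentiableAt_of_deriv_ne_zero (hT x hx.le).ne').continuousAt.continuousWithinAt
    · exact hT x (interior_subset hx).le
  have hpos : 0 < A (T + 2) :=
    (hA0 _).trans_lt (hmono (a := T + 1) (by simp) (by simp) (by linarith))
  have hsub : Ici (T + 2) ⊆ {x | A (T + 2) ≤ A x} := fun x hx =>
    (hmono.le_iff_le (by simp) (by simp at hx ⊢; linarith)).mpr hx
  have := (measure_mono (μ := volume) hsub).trans_lt (hA.measure_ge_lt_top hpos)
  simp at this

theorem MeasureTheory.Integrable.frequently_deriv_nonneg_atBot {A : ℝ → ℝ} (hA : Integrable A)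
    (hA0 : 0 ≤ A) :
    ∃ᶠ x in atBot, 0 ≤ deriv A x := by
  have := hA.comp_neg.frequently_deriv_nonpos_atTop fun x => hA0 (-x)
  refine tendsto_neg_atTop_atBot.frequently (this.mono fun x hx => ?_)
  simpa [deriv_comp_neg] using hx

theorem integral_nonneg_of_hasDerivAt_le {G g h : ℝ → ℝ} (hG : ∀ x, HasDerivAt G (g x) x)
    (hgh : ∀ x, g x ≤ h x) (hh : Integrable h) (htop : ∃ᶠ x in atTop, 0 ≤ G x)
    (hbot : ∃ᶠ x in atBot, G x ≤ 0) : 0 ≤ ∫ x, h x := by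
  have hlim := intervalIntegral_tendsto_integral hh (tendsto_fst (f := atBot) (g := atTop))
    tendsto_snd
  have hends : ∃ᶠ p in atBot ×ˢ atTop, (G p.1 ≤ 0 ∧ p.1 ≤ 0) ∧ (0 ≤ G p.2 ∧ 0 ≤ p.2) :=
    frequently_prod_and.mpr
      ⟨hbot.and_eventually (eventually_le_atBot 0), htop.and_eventually (eventually_ge_atTop 0)⟩
  refine ge_of_tendsto_of_frequently hlim (hends.mono fun ⟨a, b⟩ ⟨⟨hGa, ha⟩, hGb, hb⟩ => ?_)
  have hab : a ≤ b := ha.trans hb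
  calc 0 ≤ G b - G a := by linarith
    _ ≤ ∫ x in a..b, h x :=
      intervalIntegral.sub_le_integral_of_hasDeriv_right_of_le hab
        (fun x _ => (hG x).continuousAt.continuousWithinAt)
        (fun x _ => (hG x).hasDerivWithinAt) hh.integrableOn fun x _ => hgh x

section
variable {E : Type*} [NormedAddCommGroup E] [InnerProductSpace ℝ E]

theorem norm_neg_add_smul_sq (w u : E) (c : ℝ) :
    ‖-w + c • u‖ ^ 2 = ‖w‖ ^ 2 - 2 * c * ⟪w, u⟫_ℝ + ‖c • u‖ ^ 2 := by
  rw [neg_add_eq_sub, norm_sub_sq_real, real_inner_smul_left, real_inner_comm]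
  ring

theorem integral_norm_sq_smul_sq_le {φ φ' φ'' : ℝ → E} (hφ : ∀ x, HasDerivAt φ (φ' x) x)
    (hφ' : ∀ x, HasDerivAt φ' (φ'' x) x) (hφ2 : MemLp φ 2) (hφ''2 : MemLp φ'' 2)
    (hx2φ : MemLp (fun x : ℝ => (x ^ 2 : ℝ) • φ x) 2) :
    ∫ x, ‖(x ^ 2 : ℝ) • φ x‖ ^ 2
      ≤ (∫ x, ‖-φ'' x + (x ^ 2 : ℝ) • φ x‖ ^ 2) + 2 * ∫ x, ‖φ x‖ ^ 2 := by
  set A : ℝ → ℝ := fun x => ‖φ x‖ ^ 2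
  have hA : ∀ x, HasDerivAt A (2 * ⟪φ x, φ' x⟫_ℝ) x := fun x => (hφ x).norm_sq
  have hAint : Integrable A := hφ2.norm.integrable_sq
  have hHint : Integrable fun x => ‖-φ'' x + (x ^ 2 : ℝ) • φ x‖ ^ 2 :=
    (hφ''2.neg.add hx2φ).norm.integrable_sq
  have hx2int : Integrable fun x : ℝ => ‖(x ^ 2 : ℝ) • φ x‖ ^ 2 := hx2φ.norm.integrable_sq
  have hG : ∀ x, HasDerivAt (fun x => 2 * x * A x - x ^ 2 * (2 * ⟪φ x, φ' x⟫_ℝ))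
      (2 * A x - 2 * x ^ 2 * (⟪φ x, φ'' x⟫_ℝ + ‖φ' x‖ ^ 2)) x := by
    intro x
    have := (((hasDerivAt_id' x).const_mul 2).fun_mul (hA x)).fun_sub
      ((hasDerivAt_pow 2 x).fun_mul (((hφ x).inner ℝ (hφ' x)).const_mul 2))
    refine this.congr_deriv ?_
    rw [real_inner_self_eq_norm_sq]
    ring
  have hgh : ∀ x, 2 * A x - 2 * x ^ 2 * (⟪φ x, φ'' x⟫_ℝ + ‖φ' x‖ ^ 2)
      ≤ ‖-φ'' x + (x ^ 2 : ℝ) • φ x‖ ^ 2 + 2 * A x - ‖(x ^ 2 : ℝ) • φ x‖ ^ 2 := by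
    intro x
    rw [norm_neg_add_smul_sq, real_inner_comm]
    nlinarith [sq_nonneg ‖φ'' x‖, sq_nonneg ‖φ' x‖, sq_nonneg x]
  have htop : ∃ᶠ x in atTop, 0 ≤ 2 * x * A x - x ^ 2 * (2 * ⟪φ x, φ' x⟫_ℝ) := by
    refine ((hAint.frequently_deriv_nonpos_atTop fun x => sq_nonneg _).and_eventually
      (eventually_ge_atTop 0)).mono fun x ⟨hx, hx0⟩ => ?_
    rw [(hA x).deriv] at hx
    nlinarith [sq_nonneg ‖φ x‖, sq_nonneg x, mul_nonneg hx0 (sq_nonneg ‖φ x‖)]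
  have hbot : ∃ᶠ x in atBot, 2 * x * A x - x ^ 2 * (2 * ⟪φ x, φ' x⟫_ℝ) ≤ 0 := by
    refine ((hAint.frequently_deriv_nonneg_atBot fun x => sq_nonneg _).and_eventually
      (eventually_le_atBot 0)).mono fun x ⟨hx, hx0⟩ => ?_
    rw [(hA x).deriv] at hx
    nlinarith [sq_nonneg ‖φ x‖, sq_nonneg x, mul_nonpos_of_nonpos_of_nonneg hx0 (sq_nonneg ‖φ x‖)]
  have hsum : Integrable fun x => ‖-φ'' x + (x ^ 2 : ℝ) • φ x‖ ^ 2 + 2 * A x :=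
    hHint.add (hAint.const_mul 2)
  have := integral_nonneg_of_hasDerivAt_le hG hgh (hsum.sub hx2int) htop hbot
  rw [integral_sub hsum hx2int, integral_add hHint (hAint.const_mul 2), integral_const_mul] at this
  linarith

end

/-- For all `φ` in the domain of the 1D harmonic oscillator `-d²/dx² + x²` on `L²(ℝ)`
(represented by a `C²` function with `φ`, `φ''`, `x²φ ∈ L²`), one has
`‖x²φ‖² ≤ ‖(-d²/dx² + x²)φ‖² + 2‖φ‖²`. -/
theorem harmonic_oscillator_1d_x_sq_bound (φ : ℝ → ℂ)
    (hsmooth : ContDiff ℝ 2 φ)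
    (hφ : MemLp φ 2 (volume : Measure ℝ))
    (hφ'' : MemLp (fun x => deriv (deriv φ) x) 2 (volume : Measure ℝ))
    (hx2φ : MemLp (fun x : ℝ => (x ^ 2 : ℝ) • φ x) 2 (volume : Measure ℝ)) :
    ∫ x : ℝ, ‖(x ^ 2 : ℝ) • φ x‖ ^ 2
      ≤ (∫ x : ℝ, ‖-(deriv (deriv φ) x) + (x ^ 2 : ℝ) • φ x‖ ^ 2) +
        2 * ∫ x : ℝ, ‖φ x‖ ^ 2 :=
  integral_norm_sq_smul_sq_le (fun x => (hsmooth.differentiable two_ne_zero x).hasDerivAt)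
    (fun x => (hsmooth.differentiable_deriv_two x).hasDerivAt) hφ hφ'' hx2φ
end

section
/- The operator ℍ₂ (with a > b > 0) is unitarily equivalent, after the polar-coordinate rotation U(φ) = [[cos φ, -sin φ],[sin φ, cos φ]], to the operator ℍ₀ = -½Δ_{ρ,φ}⊗I₂ + (1/(2ρ²))⊗I₂ + diag((a+b)ρ²/2, (a-b)ρ²/2) + (1/ρ²)[[0, ∂_φ],[-∂_φ, 0]]; and ℍ₀ satisfies the operator inequalities ℍ₀⁻ ≤ ℍ₀ ≤ ℍ₀⁺, where ℍ₀^± replace both diagonal potential terms by (a±b)ρ²/2. -/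
open MeasureTheory

noncomputable section

abbrev Esp := EuclideanSpace ℂ (Fin 2)

/-- Components of a vector in `ℂ²`. -/
def ec (v : Esp) : Fin 2 → ℂ := (WithLp.equiv 2 (Fin 2 → ℂ)) v

/-- Build a vector in `ℂ²` from components. -/
def mkE (w : Fin 2 → ℂ) : Esp := (WithLp.equiv 2 (Fin 2 → ℂ)).symm w

/-- Second partial derivative in the first variable. -/
def d2X (χ : ℝ × ℝ → Esp) (p : ℝ × ℝ) : Esp :=
  deriv (fun s => deriv (fun u => χ (u, p.2)) s) p.1

/-- Second partial derivative in the second variable. -/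
def d2Y (χ : ℝ × ℝ → Esp) (p : ℝ × ℝ) : Esp :=
  deriv (fun s => deriv (fun u => χ (p.1, u)) s) p.2

/-- First partial derivative in the first variable. -/
def dX1 (χ : ℝ × ℝ → Esp) (p : ℝ × ℝ) : Esp := deriv (fun u => χ (u, p.2)) p.1

/-- First partial derivative in the second variable. -/
def dY1 (χ : ℝ × ℝ → Esp) (p : ℝ × ℝ) : Esp := deriv (fun u => χ (p.1, u)) p.2

/-- The Renner--Teller leading order differential expression `ℍ₂` in Cartesian coordinates. -/
def H2raw (a b : ℝ) (χ : ℝ × ℝ → Esp) (p : ℝ × ℝ) : Esp :=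
  (-(1 / 2 : ℂ)) • (d2X χ p + d2Y χ p) +
    mkE ![(((a + b) / 2 * p.1 ^ 2 + (a - b) / 2 * p.2 ^ 2 : ℝ) : ℂ) * ec (χ p) 0 +
        ((b * p.1 * p.2 : ℝ) : ℂ) * ec (χ p) 1,
      ((b * p.1 * p.2 : ℝ) : ℂ) * ec (χ p) 0 +
        (((a - b) / 2 * p.1 ^ 2 + (a + b) / 2 * p.2 ^ 2 : ℝ) : ℂ) * ec (χ p) 1]

/-- The rotation `U(θ) = [[cos θ, -sin θ],[sin θ, cos θ]]` acting on `ℂ²`. -/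
def rotAct (θ : ℝ) (v : Esp) : Esp :=
  mkE ![(Real.cos θ : ℂ) * ec v 0 - (Real.sin θ : ℂ) * ec v 1,
    (Real.sin θ : ℂ) * ec v 0 + (Real.cos θ : ℂ) * ec v 1]

/-- The operator
`ℍ₀ = -½Δ_{ρ,φ}⊗I₂ + (1/(2ρ²))⊗I₂ + diag((a+b)ρ²/2, (a-b)ρ²/2) + (1/ρ²)[[0,∂_φ],[-∂_φ,0]]`
in polar coordinates `q = (ρ, φ)`, where `Δ_{ρ,φ} = ∂_ρ² + (1/ρ)∂_ρ + (1/ρ²)∂_φ²`. -/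
def H0raw (a b : ℝ) (Ψ : ℝ × ℝ → Esp) (q : ℝ × ℝ) : Esp :=
  (-(1 / 2 : ℂ)) • d2X Ψ q + ((-(1 / (2 * q.1)) : ℝ) : ℂ) • dX1 Ψ q +
    ((-(1 / (2 * q.1 ^ 2)) : ℝ) : ℂ) • d2Y Ψ q +
    ((1 / (2 * q.1 ^ 2) : ℝ) : ℂ) • Ψ q +
    mkE ![(((a + b) / 2 * q.1 ^ 2 : ℝ) : ℂ) * ec (Ψ q) 0,
      (((a - b) / 2 * q.1 ^ 2 : ℝ) : ℂ) * ec (Ψ q) 1] +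
    mkE ![((1 / q.1 ^ 2 : ℝ) : ℂ) * ec (dY1 Ψ q) 1,
      -(((1 / q.1 ^ 2 : ℝ) : ℂ) * ec (dY1 Ψ q) 0)]

/-- The comparison operators `ℍ₀^±`, in which both diagonal potential terms are replaced by
`(a ± b)ρ²/2` (encoded by the sign `s = ±1`). -/
def H0pmRaw (a b s : ℝ) (Ψ : ℝ × ℝ → Esp) (q : ℝ × ℝ) : Esp :=
  (-(1 / 2 : ℂ)) • d2X Ψ q + ((-(1 / (2 * q.1)) : ℝ) : ℂ) • dX1 Ψ q +
    ((-(1 / (2 * q.1 ^ 2)) : ℝ) : ℂ) • d2Y Ψ q +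
    ((1 / (2 * q.1 ^ 2) : ℝ) : ℂ) • Ψ q +
    (((a + s * b) / 2 * q.1 ^ 2 : ℝ) : ℂ) • Ψ q +
    mkE ![((1 / q.1 ^ 2 : ℝ) : ℂ) * ec (dY1 Ψ q) 1,
      -(((1 / q.1 ^ 2 : ℝ) : ℂ) * ec (dY1 Ψ q) 0)]



/-- helper: integral monotone when difference is a nonneg integrable function -/
lemma integral_le_of_eq_add {α : Type*} [MeasurableSpace α] {μ : Measure α}
    (f g h : α → ℝ) (hfg : ∀ x, g x = f x + h x) (hint : Integrable h μ)
    (hpos : 0 ≤ᵐ[μ] h) : ∫ x, f x ∂μ ≤ ∫ x, g x ∂μ := by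
  by_cases hf : Integrable f μ
  · have hg : Integrable g μ := by
      have := hf.add hint
      rw [funext hfg]; exact this
    calc ∫ x, f x ∂μ ≤ ∫ x, f x ∂μ + ∫ x, h x ∂μ := by
          have : 0 ≤ ∫ x, h x ∂μ := integral_nonneg_of_ae hpos
          linarith
      _ = ∫ x, g x ∂μ := by rw [← integral_add hf hint]; simp [hfg]
  · have hg : ¬ Integrable g μ := by
      intro hg
      refine hf (((hg.sub hint)).congr (Filter.Eventually.of_forall fun x => ?_))
      simp [hfg]
    rw [integral_undef hf, integral_undef hg]


section helpers
variable {f : ℝ × ℝ → Esp}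

lemma curve_lineX (y t : ℝ) : HasDerivAt (fun s : ℝ => (s, y)) ((1 : ℝ), (0 : ℝ)) t :=
  (hasDerivAt_id t).prodMk (hasDerivAt_const t y)

lemma curve_lineY (x t : ℝ) : HasDerivAt (fun s : ℝ => (x, s)) ((0 : ℝ), (1 : ℝ)) t :=
  (hasDerivAt_const t x).prodMk (hasDerivAt_id t)

lemma hasDerivAt_comp_curve (hf : Differentiable ℝ f) {γ : ℝ → ℝ × ℝ} {v : ℝ × ℝ} {t : ℝ}
    (hγ : HasDerivAt γ v t) : HasDerivAt (fun s => f (γ s)) (fderiv ℝ f (γ t) v) t :=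
  (hf (γ t)).hasFDerivAt.comp_hasDerivAt t hγ

lemma hasDerivAt_fderiv_curve (hf : ContDiff ℝ (⊤ : ℕ∞) f) {γ : ℝ → ℝ × ℝ} {v : ℝ × ℝ} {t : ℝ}
    (hγ : HasDerivAt γ v t) (w : ℝ × ℝ) :
    HasDerivAt (fun s => fderiv ℝ f (γ s) w) (fderiv ℝ (fderiv ℝ f) (γ t) v w) t := by
  have h1 : Differentiable ℝ (fderiv ℝ f) :=
    (hf.fderiv_right ((by simp) : ((⊤ : ℕ∞) : WithTop ℕ∞) + 1 ≤ ((⊤ : ℕ∞) : WithTop ℕ∞))).differentiable (by simp)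
  have h2 : HasDerivAt (fun s => fderiv ℝ f (γ s)) (fderiv ℝ (fderiv ℝ f) (γ t) v) t :=
    (h1 (γ t)).hasFDerivAt.comp_hasDerivAt t hγ
  simpa using h2.clm_apply (hasDerivAt_const t w)

lemma hasDerivAt_partialX (hf : Differentiable ℝ f) (q : ℝ × ℝ) :
    HasDerivAt (fun u => f (u, q.2)) (fderiv ℝ f q (1, 0)) q.1 := by
  simpa using hasDerivAt_comp_curve hf (curve_lineX q.2 q.1)

lemma hasDerivAt_partialY (hf : Differentiable ℝ f) (q : ℝ × ℝ) :
    HasDerivAt (fun u => f (q.1, u)) (fderiv ℝ f q (0, 1)) q.2 := by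
  simpa using hasDerivAt_comp_curve hf (curve_lineY q.1 q.2)

lemma dX1_eq (hf : Differentiable ℝ f) (q : ℝ × ℝ) : dX1 f q = fderiv ℝ f q (1, 0) :=
  (hasDerivAt_partialX hf q).deriv

lemma dY1_eq (hf : Differentiable ℝ f) (q : ℝ × ℝ) : dY1 f q = fderiv ℝ f q (0, 1) :=
  (hasDerivAt_partialY hf q).deriv

lemma d2X_eq (hf : ContDiff ℝ (⊤ : ℕ∞) f) (q : ℝ × ℝ) :
    d2X f q = fderiv ℝ (fderiv ℝ f) q (1, 0) (1, 0) := by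
  have hd : Differentiable ℝ f := hf.differentiable (by simp)
  have h1 : (fun s => deriv (fun u => f (u, q.2)) s) = fun s => fderiv ℝ f (s, q.2) (1, 0) := by
    funext s
    exact (hasDerivAt_partialX hd (s, q.2)).deriv
  rw [d2X, h1]
  simpa using (hasDerivAt_fderiv_curve hf (curve_lineX q.2 q.1) (1, 0)).deriv

lemma d2Y_eq (hf : ContDiff ℝ (⊤ : ℕ∞) f) (q : ℝ × ℝ) :
    d2Y f q = fderiv ℝ (fderiv ℝ f) q (0, 1) (0, 1) := by
  have hd : Differentiable ℝ f := hf.differentiable (by simp)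
  have h1 : (fun s => deriv (fun u => f (q.1, u)) s) = fun s => fderiv ℝ f (q.1, s) (0, 1) := by
    funext s
    exact (hasDerivAt_partialY hd (q.1, s)).deriv
  rw [d2Y, h1]
  simpa using (hasDerivAt_fderiv_curve hf (curve_lineY q.1 q.2) (0, 1)).deriv

end helpers

lemma ec_add (x y : Esp) (i : Fin 2) : ec (x + y) i = ec x i + ec y i := rfl
lemma ec_smul (c : ℂ) (x : Esp) (i : Fin 2) : ec (c • x) i = c * ec x i := rfl
lemma ec_neg (x : Esp) (i : Fin 2) : ec (-x) i = -ec x i := rfl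
lemma ec_mkE (w : Fin 2 → ℂ) : ec (mkE w) = w := rfl
lemma ec_inj {x y : Esp} (h : ec x = ec y) : x = y := (WithLp.equiv 2 (Fin 2 → ℂ)).injective h

/-- The matrix `J = [[0,-1],[1,0]]` as a continuous linear map on `ℂ²`. -/
def Jop : Esp →L[ℂ] Esp :=
  LinearMap.toContinuousLinearMap
    { toFun := fun v => mkE ![-(ec v 1), ec v 0]
      map_add' := by
        intro x y; apply ec_inj; funext i; fin_cases i <;>
          simp [ec_mkE, ec_add, Matrix.cons_val_zero, Matrix.cons_val_one] <;> ring
      map_smul' := by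
        intro c x; apply ec_inj; funext i; fin_cases i <;>
          simp [ec_mkE, ec_smul, Matrix.cons_val_zero, Matrix.cons_val_one] <;> ring }

lemma ec_Jop (v : Esp) : ec (Jop v) = ![-(ec v 1), ec v 0] := rfl

lemma rot_decomp (θ : ℝ) (v : Esp) :
    rotAct θ v = ((Real.cos θ : ℝ) : ℂ) • v + ((Real.sin θ : ℝ) : ℂ) • Jop v := by
  apply ec_inj; funext i; fin_cases i <;>
    simp [rotAct, ec_mkE, ec_add, ec_smul, ec_Jop, Matrix.cons_val_zero, Matrix.cons_val_one] <;>
    ring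

lemma rotAct_add (θ : ℝ) (x y : Esp) : rotAct θ (x + y) = rotAct θ x + rotAct θ y := by
  apply ec_inj; funext i; fin_cases i <;>
    simp [rotAct, ec_mkE, ec_add, Matrix.cons_val_zero, Matrix.cons_val_one] <;> ring

lemma rotAct_smul (θ : ℝ) (c : ℂ) (x : Esp) : rotAct θ (c • x) = c • rotAct θ x := by
  apply ec_inj; funext i; fin_cases i <;>
    simp [rotAct, ec_mkE, ec_smul, Matrix.cons_val_zero, Matrix.cons_val_one] <;> ring

lemma trigC (θ : ℝ) : ((Real.cos θ : ℝ) : ℂ) ^ 2 + ((Real.sin θ : ℝ) : ℂ) ^ 2 = 1 := by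
  exact_mod_cast congrArg (Complex.ofReal) (Real.cos_sq_add_sin_sq θ)

lemma rotAct_rotAct_neg (θ : ℝ) (v : Esp) : rotAct (-θ) (rotAct θ v) = v := by
  have h2 := trigC θ
  apply ec_inj; funext i; fin_cases i <;>
    simp only [rotAct, ec_mkE, Real.cos_neg, Real.sin_neg, Matrix.cons_val_zero,
      Matrix.cons_val_one, Matrix.head_cons, Fin.zero_eta, Fin.mk_one, Complex.ofReal_neg]
  · linear_combination (ec v 0) * h2
  · linear_combination (ec v 1) * h2

lemma ofReal_smul_eq (r : ℝ) (v : Esp) : ((r : ℝ) : ℂ) • v = r • v := by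
  apply ec_inj; funext i
  simp only [ec_smul]
  have : ec (r • v) i = r • ec v i := rfl
  rw [this, Complex.real_smul]

lemma hasDerivAt_Jop {g : ℝ → Esp} {g' : Esp} {t : ℝ} (hg : HasDerivAt g g' t) :
    HasDerivAt (fun u => Jop (g u)) (Jop g') t := by
  have := (Jop.restrictScalars ℝ).hasFDerivAt.comp_hasDerivAt t hg
  exact this

lemma hasDerivAt_rotAct_const (θ : ℝ) {g : ℝ → Esp} {g' : Esp} {t : ℝ}
    (hg : HasDerivAt g g' t) : HasDerivAt (fun u => rotAct θ (g u)) (rotAct θ g') t := by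
  have h : HasDerivAt (fun u => ((Real.cos θ : ℝ) : ℂ) • g u + ((Real.sin θ : ℝ) : ℂ) • Jop (g u))
      (((Real.cos θ : ℝ) : ℂ) • g' + ((Real.sin θ : ℝ) : ℂ) • Jop g') t :=
    (hg.const_smul ((Real.cos θ : ℝ) : ℂ)).add ((hasDerivAt_Jop hg).const_smul ((Real.sin θ : ℝ) : ℂ))
  have h2 := h.congr_of_eventuallyEq
    (Filter.Eventually.of_forall fun u => (rot_decomp θ (g u)))
  rwa [← rot_decomp] at h2

lemma hasDerivAt_rotAct_var {g : ℝ → Esp} {g' : Esp} {t : ℝ}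
    (hg : HasDerivAt g g' t) :
    HasDerivAt (fun u => rotAct u (g u)) (rotAct t (g' + Jop (g t))) t := by
  have hcos : HasDerivAt (fun u : ℝ => ((Real.cos u : ℝ) : ℂ)) ((-Real.sin t : ℝ) : ℂ) t :=
    Complex.ofRealCLM.hasFDerivAt.comp_hasDerivAt t (Real.hasDerivAt_cos t)
  have hsin : HasDerivAt (fun u : ℝ => ((Real.sin u : ℝ) : ℂ)) ((Real.cos t : ℝ) : ℂ) t :=
    Complex.ofRealCLM.hasFDerivAt.comp_hasDerivAt t (Real.hasDerivAt_sin t)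
  have hJ : HasDerivAt (fun u => Jop (g u)) (Jop g') t := hasDerivAt_Jop hg
  have h := (hcos.smul hg).add (hsin.smul hJ)
  have h2 := h.congr_of_eventuallyEq
    (Filter.Eventually.of_forall fun u => (rot_decomp u (g u)))
  have hval : ((Real.cos t : ℝ) : ℂ) • g' + ((-Real.sin t : ℝ) : ℂ) • g t +
      (((Real.sin t : ℝ) : ℂ) • Jop g' + ((Real.cos t : ℝ) : ℂ) • Jop (g t))
      = rotAct t (g' + Jop (g t)) := by
    apply ec_inj; funext i; fin_cases i <;>
      · simp only [rotAct, ec_mkE, ec_add, ec_smul, ec_Jop, Matrix.cons_val_zero,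
          Matrix.cons_val_one, Matrix.head_cons, Fin.zero_eta, Fin.mk_one, Complex.ofReal_neg]
        ring
  rwa [hval] at h2

set_option maxHeartbeats 2000000 in
lemma part1 (a b : ℝ) (ψ Ψ : ℝ × ℝ → Esp) (hψ : ContDiff ℝ (⊤ : ℕ∞) ψ) (hΨ : ContDiff ℝ (⊤ : ℕ∞) Ψ)
    (hrel : ∀ ρ φ : ℝ, 0 < ρ → ψ (ρ * Real.cos φ, ρ * Real.sin φ) = rotAct φ (Ψ (ρ, φ)))
    (ρ φ : ℝ) (hρ : 0 < ρ) :
    rotAct (-φ) (H2raw a b ψ (ρ * Real.cos φ, ρ * Real.sin φ)) = H0raw a b Ψ (ρ, φ) := by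
  have hψd : Differentiable ℝ ψ := hψ.differentiable (by simp)
  have hΨd : Differentiable ℝ Ψ := hΨ.differentiable (by simp)
  have hψf : Differentiable ℝ (fderiv ℝ ψ) :=
    (hψ.fderiv_right ((by simp) : ((⊤ : ℕ∞) : WithTop ℕ∞) + 1 ≤ ((⊤ : ℕ∞) : WithTop ℕ∞))).differentiable (by simp)
  set c := Real.cos φ with hc
  set s := Real.sin φ with hs
  set p₀ : ℝ × ℝ := (ρ * c, ρ * s) with hp₀
  -- atoms for Ψ
  set P0 : Esp := Ψ (ρ, φ) with hP0
  set We1 : Esp := fderiv ℝ Ψ (ρ, φ) (1, 0) with hWe1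
  set We2 : Esp := fderiv ℝ Ψ (ρ, φ) (0, 1) with hWe2
  set M11 : Esp := fderiv ℝ (fderiv ℝ Ψ) (ρ, φ) (1, 0) (1, 0) with hM11
  set M22 : Esp := fderiv ℝ (fderiv ℝ Ψ) (ρ, φ) (0, 1) (0, 1) with hM22
  -- curves
  have hcur1 : ∀ t : ℝ, HasDerivAt (fun u : ℝ => (u * c, u * s)) ((c, s) : ℝ × ℝ) t := by
    intro t
    simpa using ((hasDerivAt_id t).mul_const c).prodMk ((hasDerivAt_id t).mul_const s)
  have hcur2 : ∀ t : ℝ, HasDerivAt (fun u : ℝ => (ρ * Real.cos u, ρ * Real.sin u))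
      ((-(ρ * Real.sin t), ρ * Real.cos t) : ℝ × ℝ) t := by
    intro t
    simpa [mul_neg] using
      ((Real.hasDerivAt_cos t).const_mul ρ).prodMk ((Real.hasDerivAt_sin t).const_mul ρ)
  -- chain rule for ψ along polar curves
  have hFXs : ∀ t : ℝ, HasDerivAt (fun u => ψ (u * c, u * s))
      (fderiv ℝ ψ (t * c, t * s) ((c, s) : ℝ × ℝ)) t :=
    fun t => hasDerivAt_comp_curve hψd (hcur1 t)
  have hFX2 : HasDerivAt (fun t => fderiv ℝ ψ (t * c, t * s) ((c, s) : ℝ × ℝ))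
      (fderiv ℝ (fderiv ℝ ψ) p₀ ((c, s) : ℝ × ℝ) ((c, s) : ℝ × ℝ)) ρ :=
    hasDerivAt_fderiv_curve hψ (hcur1 ρ) _
  have hFYs : ∀ t : ℝ, HasDerivAt (fun u => ψ (ρ * Real.cos u, ρ * Real.sin u))
      (fderiv ℝ ψ (ρ * Real.cos t, ρ * Real.sin t)
        ((-(ρ * Real.sin t), ρ * Real.cos t) : ℝ × ℝ)) t :=
    fun t => hasDerivAt_comp_curve hψd (hcur2 t)
  have hFY2 : HasDerivAt
      (fun t => fderiv ℝ ψ (ρ * Real.cos t, ρ * Real.sin t)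
        ((-(ρ * Real.sin t), ρ * Real.cos t) : ℝ × ℝ))
      (fderiv ℝ (fderiv ℝ ψ) p₀ ((-(ρ * s), ρ * c) : ℝ × ℝ) ((-(ρ * s), ρ * c) : ℝ × ℝ)
        + fderiv ℝ ψ p₀ ((-(ρ * c), -(ρ * s)) : ℝ × ℝ)) φ := by
    have hA : HasDerivAt (fun t => fderiv ℝ ψ (ρ * Real.cos t, ρ * Real.sin t))
        (fderiv ℝ (fderiv ℝ ψ) p₀ ((-(ρ * s), ρ * c) : ℝ × ℝ)) φ :=
      (hψf p₀).hasFDerivAt.comp_hasDerivAt φ (hcur2 φ)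
    have hw : HasDerivAt (fun t : ℝ => ((-(ρ * Real.sin t), ρ * Real.cos t) : ℝ × ℝ))
        ((-(ρ * c), -(ρ * s)) : ℝ × ℝ) φ := by
      simpa [mul_neg] using
        (((Real.hasDerivAt_sin φ).const_mul ρ).neg).prodMk ((Real.hasDerivAt_cos φ).const_mul ρ)
    exact hA.clm_apply hw
  -- chain rule for the rotated Ψ along polar coordinate lines
  have hGXs : ∀ t : ℝ, HasDerivAt (fun u => rotAct φ (Ψ (u, φ)))
      (rotAct φ (fderiv ℝ Ψ (t, φ) (1, 0))) t :=
    fun t => hasDerivAt_rotAct_const φ (hasDerivAt_partialX hΨd (t, φ))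
  have hGX2 : HasDerivAt (fun t => rotAct φ (fderiv ℝ Ψ (t, φ) (1, 0)))
      (rotAct φ M11) ρ :=
    hasDerivAt_rotAct_const φ (hasDerivAt_fderiv_curve hΨ (curve_lineX φ ρ) (1, 0))
  have hGYs : ∀ t : ℝ, HasDerivAt (fun u => rotAct u (Ψ (ρ, u)))
      (rotAct t (fderiv ℝ Ψ (ρ, t) (0, 1) + Jop (Ψ (ρ, t)))) t :=
    fun t => hasDerivAt_rotAct_var (hasDerivAt_partialY hΨd (ρ, t))
  have hGY2 : HasDerivAt (fun t => rotAct t (fderiv ℝ Ψ (ρ, t) (0, 1) + Jop (Ψ (ρ, t))))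
      (rotAct φ ((M22 + Jop We2) + Jop (We2 + Jop P0))) φ :=
    hasDerivAt_rotAct_var ((hasDerivAt_fderiv_curve hΨ (curve_lineY ρ φ) (0, 1)).add
      (hasDerivAt_Jop (hasDerivAt_partialY hΨd (ρ, φ))))
  -- transfer: the two representations agree on ρ > 0
  have hrel' : ∀ u v : ℝ, 0 < u → ψ (u * Real.cos v, u * Real.sin v) = rotAct v (Ψ (u, v)) := hrel
  have hEq1 : ∀ t : ℝ, 0 < t →
      (fun u => ψ (u * c, u * s)) =ᶠ[nhds t] (fun u => rotAct φ (Ψ (u, φ))) := by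
    intro t ht
    filter_upwards [eventually_gt_nhds ht] with u hu
    exact hrel' u φ hu
  have hdX1 : fderiv ℝ ψ p₀ ((c, s) : ℝ × ℝ) = rotAct φ We1 :=
    ((hFXs ρ).congr_of_eventuallyEq (hEq1 ρ hρ).symm).unique (hGXs ρ)
  have hd2X : fderiv ℝ (fderiv ℝ ψ) p₀ ((c, s) : ℝ × ℝ) ((c, s) : ℝ × ℝ) = rotAct φ M11 := by
    have hEq2 : (fun t => fderiv ℝ ψ (t * c, t * s) ((c, s) : ℝ × ℝ))
        =ᶠ[nhds ρ] (fun t => rotAct φ (fderiv ℝ Ψ (t, φ) (1, 0))) := by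
      filter_upwards [eventually_gt_nhds hρ] with t ht
      exact ((hFXs t).congr_of_eventuallyEq (hEq1 t ht).symm).unique (hGXs t)
    exact (hFX2.congr_of_eventuallyEq hEq2.symm).unique hGX2
  have hEqY : (fun u => ψ (ρ * Real.cos u, ρ * Real.sin u)) = fun u => rotAct u (Ψ (ρ, u)) :=
    funext fun u => hrel' ρ u hρ
  have hdY1 : fderiv ℝ ψ p₀ ((-(ρ * s), ρ * c) : ℝ × ℝ) = rotAct φ (We2 + Jop P0) := by
    have := hEqY ▸ (hFYs φ)
    exact this.unique (hGYs φ)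
  have hd2Y : fderiv ℝ (fderiv ℝ ψ) p₀ ((-(ρ * s), ρ * c) : ℝ × ℝ) ((-(ρ * s), ρ * c) : ℝ × ℝ)
      + fderiv ℝ ψ p₀ ((-(ρ * c), -(ρ * s)) : ℝ × ℝ)
      = rotAct φ ((M22 + Jop We2) + Jop (We2 + Jop P0)) := by
    have hEq3 : (fun t => fderiv ℝ ψ (ρ * Real.cos t, ρ * Real.sin t)
        ((-(ρ * Real.sin t), ρ * Real.cos t) : ℝ × ℝ))
        = fun t => rotAct t (fderiv ℝ Ψ (ρ, t) (0, 1) + Jop (Ψ (ρ, t))) :=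
      funext fun t => (hEqY ▸ (hFYs t)).unique (hGYs t)
    exact (hEq3 ▸ hFY2).unique hGY2
  -- the Laplacian in polar coordinates
  have KeyA : d2X ψ p₀ + d2Y ψ p₀
      = rotAct φ (M11 + ((1 / ρ : ℝ) : ℂ) • We1
        + ((1 / ρ ^ 2 : ℝ) : ℂ) • ((M22 + Jop We2) + Jop (We2 + Jop P0))) := by
    have hcs : c ^ 2 + s ^ 2 = 1 := by rw [hc, hs]; exact Real.cos_sq_add_sin_sq φ
    rw [d2X_eq hψ p₀, d2Y_eq hψ p₀, rotAct_add, rotAct_add, rotAct_smul, rotAct_smul,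
      ← hd2X, ← hdX1, ← hd2Y, ofReal_smul_eq, ofReal_smul_eq]
    have hv1 : ((c, s) : ℝ × ℝ) = c • ((1, 0) : ℝ × ℝ) + s • ((0, 1) : ℝ × ℝ) := by
      simp [Prod.ext_iff]
    have hv2 : ((-(ρ * s), ρ * c) : ℝ × ℝ)
        = (-(ρ * s)) • ((1, 0) : ℝ × ℝ) + (ρ * c) • ((0, 1) : ℝ × ℝ) := by
      simp [Prod.ext_iff]
    have hv3 : ((-(ρ * c), -(ρ * s)) : ℝ × ℝ)
        = (-(ρ * c)) • ((1, 0) : ℝ × ℝ) + (-(ρ * s)) • ((0, 1) : ℝ × ℝ) := by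
      simp [Prod.ext_iff]
    rw [hv1, hv2, hv3]
    simp only [map_add, _root_.map_smul, ContinuousLinearMap.add_apply, ContinuousLinearMap.smul_apply]
    match_scalars <;> field_simp <;>
      first
        | ring1
        | linear_combination (ρ : ℝ) ^ 2 * hcs
        | linear_combination -((ρ : ℝ) ^ 2) * hcs
        | linear_combination hcs
        | linear_combination -hcs
        | linear_combination (ρ : ℝ) * hcs
        | linear_combination -(ρ : ℝ) * hcs
  -- the potential term
  have KeyC : mkE ![(((a + b) / 2 * (ρ * c) ^ 2 + (a - b) / 2 * (ρ * s) ^ 2 : ℝ) : ℂ)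
          * ec (rotAct φ P0) 0 + ((b * (ρ * c) * (ρ * s) : ℝ) : ℂ) * ec (rotAct φ P0) 1,
        ((b * (ρ * c) * (ρ * s) : ℝ) : ℂ) * ec (rotAct φ P0) 0 +
          (((a - b) / 2 * (ρ * c) ^ 2 + (a + b) / 2 * (ρ * s) ^ 2 : ℝ) : ℂ) * ec (rotAct φ P0) 1]
      = rotAct φ (mkE ![(((a + b) / 2 * ρ ^ 2 : ℝ) : ℂ) * ec P0 0,
          (((a - b) / 2 * ρ ^ 2 : ℝ) : ℂ) * ec P0 1]) := by
    have hcsC : ((c : ℝ) : ℂ) ^ 2 + ((s : ℝ) : ℂ) ^ 2 = 1 := by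
      have hcs : c ^ 2 + s ^ 2 = 1 := by rw [hc, hs]; exact Real.cos_sq_add_sin_sq φ
      exact_mod_cast congrArg (fun r : ℝ => (r : ℂ)) hcs
    apply ec_inj; funext i; fin_cases i <;>
      simp only [rotAct, ec_mkE, Matrix.cons_val_zero, Matrix.cons_val_one, Matrix.head_cons,
        Fin.zero_eta, Fin.mk_one, ← hc, ← hs]
    · push_cast
      linear_combination ((((a : ℂ) + b) / 2 * ρ ^ 2 * c * ec P0 0
        - ((a : ℂ) - b) / 2 * ρ ^ 2 * s * ec P0 1)) * hcsC
    · push_cast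
      linear_combination ((((a : ℂ) + b) / 2 * ρ ^ 2 * s * ec P0 0
        + ((a : ℂ) - b) / 2 * ρ ^ 2 * c * ec P0 1)) * hcsC
  -- assemble
  have hψp : ψ p₀ = rotAct φ P0 := hrel' ρ φ hρ
  simp only [H2raw, H0raw]
  rw [KeyA]
  simp only [hψp]
  rw [KeyC, ← rotAct_smul, ← rotAct_add, rotAct_rotAct_neg]
  rw [show d2X Ψ (ρ, φ) = M11 from d2X_eq hΨ (ρ, φ),
    show d2Y Ψ (ρ, φ) = M22 from d2Y_eq hΨ (ρ, φ),
    show dX1 Ψ (ρ, φ) = We1 from dX1_eq hΨd (ρ, φ),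
    show dY1 Ψ (ρ, φ) = We2 from dY1_eq hΨd (ρ, φ)]
  have hρC : (ρ : ℂ) ≠ 0 := Complex.ofReal_ne_zero.mpr hρ.ne'
  apply ec_inj; funext i; fin_cases i <;>
    · simp only [ec_add, ec_smul, ec_mkE, ec_Jop, ec_neg, Matrix.cons_val_zero,
        Matrix.cons_val_one, Matrix.head_cons, Fin.zero_eta, Fin.mk_one]
      push_cast
      field_simp
      ring_nf
      field_simp
      try ring1

lemma H0_sub_minus (a b : ℝ) (Ψ : ℝ × ℝ → Esp) (q : ℝ × ℝ) :
    H0raw a b Ψ q = H0pmRaw a b (-1) Ψ q + mkE ![((b * q.1 ^ 2 : ℝ) : ℂ) * ec (Ψ q) 0, 0] := by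
  apply ec_inj; funext i; fin_cases i <;>
    · simp only [H0raw, H0pmRaw, ec_add, ec_smul, ec_mkE, Matrix.cons_val_zero,
        Matrix.cons_val_one, Matrix.head_cons, Fin.isValue]
      push_cast
      ring

lemma H0_sub_plus (a b : ℝ) (Ψ : ℝ × ℝ → Esp) (q : ℝ × ℝ) :
    H0pmRaw a b 1 Ψ q = H0raw a b Ψ q + mkE ![0, ((b * q.1 ^ 2 : ℝ) : ℂ) * ec (Ψ q) 1] := by
  apply ec_inj; funext i; fin_cases i <;>
    · simp only [H0raw, H0pmRaw, ec_add, ec_smul, ec_mkE, Matrix.cons_val_zero,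
        Matrix.cons_val_one, Matrix.head_cons, Fin.isValue]
      push_cast
      ring

lemma re_inner0 (x : Esp) (c : ℝ) :
    (inner ℂ x (mkE ![(c : ℂ) * ec x 0, 0]) : ℂ).re = c * Complex.normSq (ec x 0) := by
  simp [PiLp.inner_apply, ec, mkE, Fin.sum_univ_two, Complex.mul_re, Complex.mul_im,
    Complex.normSq_apply]
  ring

lemma re_inner1 (x : Esp) (c : ℝ) :
    (inner ℂ x (mkE ![0, (c : ℂ) * ec x 1]) : ℂ).re = c * Complex.normSq (ec x 1) := by
  simp [PiLp.inner_apply, ec, mkE, Fin.sum_univ_two, Complex.mul_re, Complex.mul_im,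
    Complex.normSq_apply]
  ring

lemma inner_add_re (x y z : Esp) : (inner ℂ x (y + z) : ℂ).re = (inner ℂ x y : ℂ).re + (inner ℂ x z : ℂ).re := by
  rw [inner_add_right]; simp

lemma part2 (a b : ℝ) (hb : 0 < b) :
    ∀ Ψ : ℝ × ℝ → Esp, ContDiff ℝ (⊤ : ℕ∞) Ψ → HasCompactSupport Ψ →
      (∀ q : ℝ × ℝ, q.1 ≤ 0 → Ψ q = 0) →
      (∫ q in (Set.Ioi (0 : ℝ)) ×ˢ (Set.Ioo (0 : ℝ) (2 * Real.pi)),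
          q.1 * (inner ℂ (Ψ q) (H0pmRaw a b (-1) Ψ q) : ℂ).re)
        ≤ (∫ q in (Set.Ioi (0 : ℝ)) ×ˢ (Set.Ioo (0 : ℝ) (2 * Real.pi)),
            q.1 * (inner ℂ (Ψ q) (H0raw a b Ψ q) : ℂ).re) ∧
      (∫ q in (Set.Ioi (0 : ℝ)) ×ˢ (Set.Ioo (0 : ℝ) (2 * Real.pi)),
          q.1 * (inner ℂ (Ψ q) (H0raw a b Ψ q) : ℂ).re)
        ≤ ∫ q in (Set.Ioi (0 : ℝ)) ×ˢ (Set.Ioo (0 : ℝ) (2 * Real.pi)),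
            q.1 * (inner ℂ (Ψ q) (H0pmRaw a b 1 Ψ q) : ℂ).re := by
  intro Ψ hΨ hcs _hzero
  have hD : MeasurableSet ((Set.Ioi (0 : ℝ)) ×ˢ (Set.Ioo (0 : ℝ) (2 * Real.pi))) :=
    measurableSet_Ioi.prod measurableSet_Ioo
  have hint : ∀ i : Fin 2,
      Integrable (fun q : ℝ × ℝ => b * q.1 ^ 3 * Complex.normSq (ec (Ψ q) i)) volume := by
    intro i
    have hc : Continuous fun q : ℝ × ℝ => ec (Ψ q) i :=
      (continuous_apply i).comp ((PiLp.continuousLinearEquiv 2 ℂ _).continuous.comp hΨ.continuous)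
    have hcont : Continuous fun q : ℝ × ℝ => b * q.1 ^ 3 * Complex.normSq (ec (Ψ q) i) :=
      (continuous_const.mul (continuous_fst.pow 3)).mul (Complex.continuous_normSq.comp hc)
    refine hcont.integrable_of_hasCompactSupport (hcs.mono ?_)
    intro q hq
    simp only [Function.mem_support] at hq ⊢
    intro h0
    exact hq (by simp [h0, ec])
  have hpos : ∀ i : Fin 2, (0 : ℝ × ℝ → ℝ)
      ≤ᵐ[volume.restrict ((Set.Ioi (0 : ℝ)) ×ˢ (Set.Ioo (0 : ℝ) (2 * Real.pi)))]
      fun q => b * q.1 ^ 3 * Complex.normSq (ec (Ψ q) i) := by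
    intro i
    filter_upwards [ae_restrict_mem hD] with q hq
    have h1 : 0 < q.1 := hq.1
    have := Complex.normSq_nonneg (ec (Ψ q) i)
    positivity
  constructor
  · refine integral_le_of_eq_add _ _ (fun q => b * q.1 ^ 3 * Complex.normSq (ec (Ψ q) 0))
      (fun q => ?_) ((hint 0).restrict) (hpos 0)
    rw [H0_sub_minus a b Ψ q, inner_add_re, re_inner0]
    ring
  · refine integral_le_of_eq_add _ _ (fun q => b * q.1 ^ 3 * Complex.normSq (ec (Ψ q) 1))
      (fun q => ?_) ((hint 1).restrict) (hpos 1)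
    rw [H0_sub_plus a b Ψ q, inner_add_re, re_inner1]
    ring

/-- `ℍ₂` is unitarily equivalent, after the polar-coordinate rotation `U(φ)`, to the polar
operator `ℍ₀`, and `ℍ₀` satisfies the quadratic-form inequalities `ℍ₀⁻ ≤ ℍ₀ ≤ ℍ₀⁺`. -/
theorem H2_polar_equivalence_and_form_bounds (a b : ℝ) (hb : 0 < b) (hab : b < a) :
    -- `U⁻¹ ℍ₂ U = ℍ₀` in polar coordinates:
    (∀ ψ Ψ : ℝ × ℝ → Esp, ContDiff ℝ (⊤ : ℕ∞) ψ → ContDiff ℝ (⊤ : ℕ∞) Ψ →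
      (∀ q : ℝ × ℝ, Ψ (q.1, q.2 + 2 * Real.pi) = Ψ q) →
      (∀ ρ φ : ℝ, 0 < ρ → ψ (ρ * Real.cos φ, ρ * Real.sin φ) = rotAct φ (Ψ (ρ, φ))) →
      ∀ ρ φ : ℝ, 0 < ρ →
        rotAct (-φ) (H2raw a b ψ (ρ * Real.cos φ, ρ * Real.sin φ)) = H0raw a b Ψ (ρ, φ)) ∧
    -- the quadratic form inequalities `ℍ₀⁻ ≤ ℍ₀ ≤ ℍ₀⁺`:
    ∀ Ψ : ℝ × ℝ → Esp, ContDiff ℝ (⊤ : ℕ∞) Ψ → HasCompactSupport Ψ →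
      (∀ q : ℝ × ℝ, q.1 ≤ 0 → Ψ q = 0) →
      (∫ q in (Set.Ioi (0 : ℝ)) ×ˢ (Set.Ioo (0 : ℝ) (2 * Real.pi)),
          q.1 * (inner ℂ (Ψ q) (H0pmRaw a b (-1) Ψ q) : ℂ).re)
        ≤ (∫ q in (Set.Ioi (0 : ℝ)) ×ˢ (Set.Ioo (0 : ℝ) (2 * Real.pi)),
            q.1 * (inner ℂ (Ψ q) (H0raw a b Ψ q) : ℂ).re) ∧
      (∫ q in (Set.Ioi (0 : ℝ)) ×ˢ (Set.Ioo (0 : ℝ) (2 * Real.pi)),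
          q.1 * (inner ℂ (Ψ q) (H0raw a b Ψ q) : ℂ).re)
        ≤ ∫ q in (Set.Ioi (0 : ℝ)) ×ˢ (Set.Ioo (0 : ℝ) (2 * Real.pi)),
            q.1 * (inner ℂ (Ψ q) (H0pmRaw a b 1 Ψ q) : ℂ).re := by
  constructor
  · intro ψ Ψ hψ hΨ _hper hrel ρ φ hρ
    exact part1 a b ψ Ψ hψ hΨ hrel ρ φ hρ
  · exact part2 a b hb
  
end
end

section
/- Fix a ∈ ℝ, a > 0, and b̃ ∈ (0,1), and let ρ ≥ 0. For each N ∈ ℕ, the ℂ²-valued function Ψ_{N}(ρ,φ) = (−r̃ sin φ · L_N¹(r̃²) e^{−r̃²/2}, r̃ cos φ · L_N¹(r̃²) e^{−r̃²/2}) with r̃ = (a−b)^{1/4} ρ is an eigenfunction of ℍ₂ with eigenvalue (2N+2)√(a−b), where b = b̃ a. -/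
/-!
With `ω = √(a - b)` and `G(t) = L_N¹(t) e^{-t/2}`, the state is `Ψ = (a - b)^{1/4} (-y, x) G(ω r²)`.
The diagonal of the potential is `(a - b) r² / 2 + b x²` and `(a - b) r² / 2 + b y²`; on `(-y, x)`
the terms `b x²` and `b y²` are cancelled exactly by the coupling `b x y`, so the potential acts on
`Ψ` as the isotropic `(a - b) r² / 2`. With `Δ (y G(ω r²)) = y (4 ω² r² G'' + 8 ω G')`, the
Laguerre equation `t L'' + (2 - t) L' + N L = 0`, rewritten as
`-2 t G'' - 4 G' + t G / 2 = (2 N + 2) G`, is then the eigenvalue equation at `t = ω r²`.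
Square integrability follows from `t L_N¹(t)² e^{-t} ≤ K e^{-t/2}`.
-/

open MeasureTheory

/-- The associated Laguerre polynomial `L_N¹(x) = Σ_{j=0}^N (-1)^j C(N+1, N-j) x^j / j!`. -/
noncomputable def lagOne (N : ℕ) (x : ℝ) : ℝ :=
  ∑ j ∈ Finset.range (N + 1),
    (-1 : ℝ) ^ j * (Nat.choose (N + 1) (N - j) : ℝ) * x ^ j / (Nat.factorial j : ℝ)

/-- The (classical) Laplacian of a real-valued function on `ℝ²`. -/
noncomputable def lap2R (f : ℝ × ℝ → ℝ) (p : ℝ × ℝ) : ℝ :=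
  deriv (fun s => deriv (fun u => f (u, p.2)) s) p.1 +
    deriv (fun s => deriv (fun u => f (p.1, u)) s) p.2

noncomputable def lagCoeff (N j : ℕ) : ℝ :=
  (-1 : ℝ) ^ j * (Nat.choose (N + 1) (N - j) : ℝ) / (Nat.factorial j : ℝ)

noncomputable def lagOneDeriv (N : ℕ) (x : ℝ) : ℝ :=
  ∑ j ∈ Finset.range (N + 1), lagCoeff N j * (j * x ^ (j - 1))

noncomputable def lagOneDeriv2 (N : ℕ) (x : ℝ) : ℝ :=
  ∑ j ∈ Finset.range (N + 1), lagCoeff N j * (j * ((j - 1 : ℕ) * x ^ (j - 1 - 1)))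

lemma lagOne_eq_sum (N : ℕ) (x : ℝ) :
    lagOne N x = ∑ j ∈ Finset.range (N + 1), lagCoeff N j * x ^ j :=
  Finset.sum_congr rfl fun j _ => by rw [lagCoeff]; ring

lemma hasDerivAt_lagOne (N : ℕ) (x : ℝ) : HasDerivAt (lagOne N) (lagOneDeriv N x) x := by
  rw [show lagOne N = _ from funext (lagOne_eq_sum N)]
  exact HasDerivAt.fun_sum fun j _ => (hasDerivAt_pow j x).const_mul (lagCoeff N j)

lemma hasDerivAt_lagOneDeriv (N : ℕ) (x : ℝ) :
    HasDerivAt (lagOneDeriv N) (lagOneDeriv2 N x) x :=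
  HasDerivAt.fun_sum fun j _ =>
    ((hasDerivAt_pow (j - 1) x).const_mul (j : ℝ)).const_mul (lagCoeff N j)

lemma continuous_lagOne (N : ℕ) : Continuous (lagOne N) :=
  continuous_iff_continuousAt.2 fun x => (hasDerivAt_lagOne N x).continuousAt

-- Fails at `j = N`, where the truncated `N - (N + 1) = 0` makes `lagCoeff N (N + 1)` nonzero.
lemma lagCoeff_succ_mul (N j : ℕ) (hj : j < N) :
    lagCoeff N (j + 1) * ((j + 1) * (j + 2)) = -((N - j) * lagCoeff N j) := by
  have hchoose : ((N + 1).choose (N - j) : ℝ) * (N - j : ℕ) =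
      (N + 1).choose (N - (j + 1)) * (j + 2) := by
    have h := Nat.choose_succ_right_eq (N + 1) (N - (j + 1))
    rw [show N - (j + 1) + 1 = N - j by omega, show N + 1 - (N - (j + 1)) = j + 2 by omega] at h
    exact_mod_cast h
  rw [Nat.cast_sub hj.le] at hchoose
  have hfact : (j.factorial : ℝ) ≠ 0 := by positivity
  simp only [lagCoeff, Nat.factorial_succ, pow_succ, Nat.cast_mul, Nat.cast_succ]
  field_simp
  linear_combination hchoose

lemma lagOne_ode (N : ℕ) (x : ℝ) :
    x * lagOneDeriv2 N x + (2 - x) * lagOneDeriv N x + N * lagOne N x = 0 := by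
  have hterm : ∀ j : ℕ,
      x * (lagCoeff N j * (j * ((j - 1 : ℕ) * x ^ (j - 1 - 1))))
        + (2 - x) * (lagCoeff N j * (j * x ^ (j - 1))) + N * (lagCoeff N j * x ^ j)
      = lagCoeff N j * (j * (j + 1) * x ^ (j - 1)) + (N - j) * (lagCoeff N j * x ^ j) := by
    rintro (_ | _ | j)
    · simp
    · simp only [zero_add, Nat.cast_one, tsub_self, CharP.cast_eq_zero, zero_tsub, pow_zero,
        mul_one, mul_zero, pow_one, one_mul]
      ring
    · simp only [Nat.add_sub_cancel, Nat.cast_add, Nat.cast_one, pow_succ]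
      ring
  have hlower : ∑ j ∈ Finset.range (N + 1), lagCoeff N j * (j * (j + 1) * x ^ (j - 1)) =
      ∑ j ∈ Finset.range N, -((N - j) * (lagCoeff N j * x ^ j)) := by
    rw [Finset.sum_range_succ', Nat.cast_zero, zero_mul, zero_mul, mul_zero, add_zero]
    refine Finset.sum_congr rfl fun j hj => ?_
    rw [Nat.add_sub_cancel, Nat.cast_succ]
    linear_combination x ^ j * lagCoeff_succ_mul N j (Finset.mem_range.mp hj)
  have hupper : ∑ j ∈ Finset.range (N + 1), (N - j : ℝ) * (lagCoeff N j * x ^ j) =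
      ∑ j ∈ Finset.range N, (N - j) * (lagCoeff N j * x ^ j) := by
    rw [Finset.sum_range_succ, sub_self, zero_mul, add_zero]
  rw [lagOneDeriv2, lagOneDeriv, lagOne_eq_sum, Finset.mul_sum, Finset.mul_sum, Finset.mul_sum,
    ← Finset.sum_add_distrib, ← Finset.sum_add_distrib, Finset.sum_congr rfl fun j _ => hterm j,
    Finset.sum_add_distrib, hlower, hupper, ← Finset.sum_add_distrib]
  simp

noncomputable def lagFun (N : ℕ) (t : ℝ) : ℝ := lagOne N t * Real.exp (-t / 2)

noncomputable def lagFunDeriv (N : ℕ) (t : ℝ) : ℝ :=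
  (lagOneDeriv N t - lagOne N t / 2) * Real.exp (-t / 2)

noncomputable def lagFunDeriv2 (N : ℕ) (t : ℝ) : ℝ :=
  (lagOneDeriv2 N t - lagOneDeriv N t + lagOne N t / 4) * Real.exp (-t / 2)

lemma hasDerivAt_exp_neg_half (t : ℝ) :
    HasDerivAt (fun t => Real.exp (-t / 2)) (Real.exp (-t / 2) * (-1 / 2)) t :=
  ((hasDerivAt_neg t).div_const 2).exp

lemma hasDerivAt_lagFun (N : ℕ) (t : ℝ) : HasDerivAt (lagFun N) (lagFunDeriv N t) t := by
  refine ((hasDerivAt_lagOne N t).fun_mul (hasDerivAt_exp_neg_half t)).congr_deriv ?_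
  rw [lagFunDeriv]
  ring

lemma hasDerivAt_lagFunDeriv (N : ℕ) (t : ℝ) :
    HasDerivAt (lagFunDeriv N) (lagFunDeriv2 N t) t := by
  refine (((hasDerivAt_lagOneDeriv N t).fun_sub ((hasDerivAt_lagOne N t).div_const 2)).fun_mul
    (hasDerivAt_exp_neg_half t)).congr_deriv ?_
  rw [lagFunDeriv2]
  ring

lemma lagFun_ode (N : ℕ) (t : ℝ) :
    -2 * t * lagFunDeriv2 N t - 4 * lagFunDeriv N t + t / 2 * lagFun N t =
      (2 * N + 2) * lagFun N t := by
  rw [lagFun, lagFunDeriv, lagFunDeriv2]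
  linear_combination -2 * Real.exp (-t / 2) * lagOne_ode N t

lemma lap2R_comp_swap (f : ℝ × ℝ → ℝ) (p : ℝ × ℝ) :
    lap2R (fun q => f (q.2, q.1)) p = lap2R f (p.2, p.1) :=
  add_comm _ _

section Radial

variable {G G' G'' : ℝ → ℝ} (k ω : ℝ)

lemma hasDerivAt_comp_radial (hG : ∀ t, HasDerivAt G (G' t) t) (c s : ℝ) :
    HasDerivAt (fun u => G (ω * (u ^ 2 + c))) (G' (ω * (s ^ 2 + c)) * (ω * (2 * s))) s := by
  refine (hG _).comp s (((hasDerivAt_pow 2 s).add_const c).const_mul ω |>.congr_deriv ?_)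
  ring

lemma lap2R_mul_snd_comp_radial (hG : ∀ t, HasDerivAt G (G' t) t)
    (hG' : ∀ t, HasDerivAt G' (G'' t) t) (p : ℝ × ℝ) :
    lap2R (fun q => k * q.2 * G (ω * (q.1 ^ 2 + q.2 ^ 2))) p =
      k * p.2 * (4 * ω ^ 2 * (p.1 ^ 2 + p.2 ^ 2) * G'' (ω * (p.1 ^ 2 + p.2 ^ 2)) +
        8 * ω * G' (ω * (p.1 ^ 2 + p.2 ^ 2))) := by
  obtain ⟨x, y⟩ := p
  have hlin : ∀ s : ℝ, HasDerivAt (fun u => ω * (2 * u)) (ω * 2) s := fun s =>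
    ((hasDerivAt_id s).const_mul 2).const_mul ω |>.congr_deriv (by simp)
  have hxx : deriv (fun s => deriv (fun u => k * y * G (ω * (u ^ 2 + y ^ 2))) s) x =
      k * y * (G'' (ω * (x ^ 2 + y ^ 2)) * (ω * (2 * x)) * (ω * (2 * x)) +
        G' (ω * (x ^ 2 + y ^ 2)) * (ω * 2)) := by
    have h1 : deriv (fun u => k * y * G (ω * (u ^ 2 + y ^ 2))) =
        fun s => k * y * (G' (ω * (s ^ 2 + y ^ 2)) * (ω * (2 * s))) :=
      funext fun s => ((hasDerivAt_comp_radial ω hG _ s).const_mul (k * y)).deriv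
    rw [h1]
    exact (((hasDerivAt_comp_radial ω hG' _ x).fun_mul (hlin x)).const_mul (k * y)).deriv
  have hyy : deriv (fun s => deriv (fun u => k * u * G (ω * (x ^ 2 + u ^ 2))) s) y =
      k * (G' (ω * (x ^ 2 + y ^ 2)) * (ω * (2 * y))) +
        (k * (G' (ω * (x ^ 2 + y ^ 2)) * (ω * (2 * y))) +
          k * y * (G'' (ω * (x ^ 2 + y ^ 2)) * (ω * (2 * y)) * (ω * (2 * y)) +
            G' (ω * (x ^ 2 + y ^ 2)) * (ω * 2))) := by
    simp_rw [add_comm (x ^ 2)]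
    have h1 : deriv (fun u => k * u * G (ω * (u ^ 2 + x ^ 2))) =
        fun s => k * G (ω * (s ^ 2 + x ^ 2)) +
          k * s * (G' (ω * (s ^ 2 + x ^ 2)) * (ω * (2 * s))) := by
      funext s
      exact (((hasDerivAt_id s).const_mul k).fun_mul
        (hasDerivAt_comp_radial ω hG _ s)).deriv.trans (by simp)
    rw [h1]
    exact (((hasDerivAt_comp_radial ω hG _ y).const_mul k).fun_add
      (((hasDerivAt_id y).const_mul k).fun_mul
        ((hasDerivAt_comp_radial ω hG' _ y).fun_mul (hlin y)))).deriv.trans (by simp)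
  rw [lap2R]
  dsimp only
  rw [hxx, hyy]
  ring

lemma lap2R_mul_fst_comp_radial (hG : ∀ t, HasDerivAt G (G' t) t)
    (hG' : ∀ t, HasDerivAt G' (G'' t) t) (p : ℝ × ℝ) :
    lap2R (fun q => k * q.1 * G (ω * (q.1 ^ 2 + q.2 ^ 2))) p =
      k * p.1 * (4 * ω ^ 2 * (p.1 ^ 2 + p.2 ^ 2) * G'' (ω * (p.1 ^ 2 + p.2 ^ 2)) +
        8 * ω * G' (ω * (p.1 ^ 2 + p.2 ^ 2))) := by
  have hswap := lap2R_comp_swap (fun q => k * q.2 * G (ω * (q.1 ^ 2 + q.2 ^ 2))) p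
  rw [lap2R_mul_snd_comp_radial k ω hG hG', add_comm (p.2 ^ 2)] at hswap
  rw [← hswap]
  congr 1 with q
  rw [add_comm]

end Radial

lemma pow_le_factorial_mul_exp (m : ℕ) {u : ℝ} (hu : 0 ≤ u) :
    u ^ m ≤ m.factorial * 2 ^ m * Real.exp (u / 2) := by
  have h := Real.pow_div_factorial_le_exp (u / 2) (by positivity) m
  rw [div_pow, div_div, div_le_iff₀ (by positivity)] at h
  linarith

lemma abs_lagOne_le (N : ℕ) {t : ℝ} (ht : 0 ≤ t) :
    |lagOne N t| ≤ (∑ j ∈ Finset.range (N + 1), |lagCoeff N j|) * (1 + t) ^ N := by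
  rw [lagOne_eq_sum, Finset.sum_mul]
  refine (Finset.abs_sum_le_sum_abs _ _).trans (Finset.sum_le_sum fun j hj => ?_)
  rw [abs_mul, abs_pow, abs_of_nonneg ht]
  gcongr
  calc t ^ j ≤ (1 + t) ^ j := by gcongr; linarith
    _ ≤ (1 + t) ^ N := pow_le_pow_right₀ (by linarith) (Nat.lt_succ_iff.mp (Finset.mem_range.mp hj))

lemma exists_mul_lagOne_sq_mul_exp_le (N : ℕ) :
    ∃ K, ∀ t : ℝ, 0 ≤ t → t * lagOne N t ^ 2 * Real.exp (-t) ≤ K * Real.exp (-t / 2) := by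
  set A := ∑ j ∈ Finset.range (N + 1), |lagCoeff N j|
  refine ⟨A ^ 2 * ((2 * N + 1).factorial * 2 ^ (2 * N + 1) * Real.exp (1 / 2)), fun t ht => ?_⟩
  have hsq : lagOne N t ^ 2 ≤ (A * (1 + t) ^ N) ^ 2 := by
    rw [← sq_abs]
    exact pow_le_pow_left₀ (abs_nonneg _) (abs_lagOne_le N ht) 2
  have hexp : Real.exp ((1 + t) / 2) * Real.exp (-t) = Real.exp (1 / 2) * Real.exp (-t / 2) := by
    rw [← Real.exp_add, ← Real.exp_add]
    ring_nf
  calc t * lagOne N t ^ 2 * Real.exp (-t)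
      ≤ (1 + t) * (A * (1 + t) ^ N) ^ 2 * Real.exp (-t) := by gcongr; linarith
    _ = A ^ 2 * ((1 + t) ^ (2 * N + 1) * Real.exp (-t)) := by ring
    _ ≤ A ^ 2 * ((2 * N + 1).factorial * 2 ^ (2 * N + 1) * Real.exp ((1 + t) / 2) *
          Real.exp (-t)) := by
        gcongr
        exact pow_le_factorial_mul_exp _ (by linarith)
    _ = A ^ 2 * ((2 * N + 1).factorial * 2 ^ (2 * N + 1) * Real.exp (1 / 2)) *
          Real.exp (-t / 2) := by
        rw [mul_assoc _ (Real.exp _), hexp]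
        ring

lemma memLp_two_of_sq_le_gaussian {h : ℝ × ℝ → ℝ} (hh : AEStronglyMeasurable h volume)
    {C κ : ℝ} (hκ : 0 < κ) (hle : ∀ p, h p ^ 2 ≤ C * Real.exp (-κ * (p.1 ^ 2 + p.2 ^ 2))) :
    MemLp h 2 volume := by
  have hgauss : Integrable (fun p : ℝ × ℝ => Real.exp (-κ * (p.1 ^ 2 + p.2 ^ 2))) := by
    simp_rw [mul_add, Real.exp_add]
    rw [Measure.volume_eq_prod]
    exact (integrable_exp_neg_mul_sq hκ).mul_prod (integrable_exp_neg_mul_sq hκ)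
  refine (memLp_two_iff_integrable_sq hh).2 <| (hgauss.const_mul C).mono' (hh.pow 2) ?_
  filter_upwards with p
  rw [Real.norm_eq_abs, abs_of_nonneg (sq_nonneg _)]
  exact hle p

lemma memLp_mul_lagFun_radial (N : ℕ) {ω : ℝ} (hω : 0 < ω) (k : ℝ) {ℓ : ℝ × ℝ → ℝ}
    (hℓ : Continuous ℓ) (hℓle : ∀ p, ℓ p ^ 2 ≤ p.1 ^ 2 + p.2 ^ 2) :
    MemLp (fun q => k * ℓ q * lagFun N (ω * (q.1 ^ 2 + q.2 ^ 2))) 2 volume := by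
  obtain ⟨K, hK⟩ := exists_mul_lagOne_sq_mul_exp_le N
  have hcont : Continuous fun q : ℝ × ℝ => k * ℓ q * lagFun N (ω * (q.1 ^ 2 + q.2 ^ 2)) := by
    unfold lagFun
    have := continuous_lagOne N
    fun_prop
  refine memLp_two_of_sq_le_gaussian hcont.aestronglyMeasurable (C := k ^ 2 * (K / ω))
    (half_pos hω) fun p => ?_
  set r2 := p.1 ^ 2 + p.2 ^ 2
  have ht : 0 ≤ ω * r2 := by positivity
  have hlag : lagFun N (ω * r2) ^ 2 = lagOne N (ω * r2) ^ 2 * Real.exp (-(ω * r2)) := by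
    rw [lagFun, mul_pow, ← Real.exp_nat_mul]
    ring_nf
  have hbound : r2 * lagFun N (ω * r2) ^ 2 ≤ K / ω * Real.exp (-(ω / 2) * r2) := by
    calc r2 * lagFun N (ω * r2) ^ 2
        = ω * r2 * lagOne N (ω * r2) ^ 2 * Real.exp (-(ω * r2)) / ω := by
          rw [hlag]; field_simp
      _ ≤ K * Real.exp (-(ω * r2) / 2) / ω :=
          div_le_div_of_nonneg_right (hK _ ht) hω.le
      _ = K / ω * Real.exp (-(ω / 2) * r2) := by ring_nf
  calc (k * ℓ p * lagFun N (ω * r2)) ^ 2 = k ^ 2 * (ℓ p ^ 2 * lagFun N (ω * r2) ^ 2) := by ring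
    _ ≤ k ^ 2 * (r2 * lagFun N (ω * r2) ^ 2) := by gcongr; exact hℓle p
    _ ≤ k ^ 2 * (K / ω * Real.exp (-(ω / 2) * r2)) := by gcongr
    _ = _ := by ring

theorem renner_l0_minus_eigenfunctions_general (a btil : ℝ) (ha : 0 < a)
    (hb1 : btil < 1) (b : ℝ) (hbdef : b = btil * a) (N : ℕ)
    (F f g : ℝ × ℝ → ℝ)
    (hF : F = fun p : ℝ × ℝ =>
      lagOne N (Real.sqrt (a - b) * (p.1 ^ 2 + p.2 ^ 2)) *
        Real.exp (-(Real.sqrt (a - b) * (p.1 ^ 2 + p.2 ^ 2)) / 2))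
    (hf : f = fun p : ℝ × ℝ => -((a - b) ^ ((1 : ℝ) / 4) * p.2) * F p)
    (hg : g = fun p : ℝ × ℝ => ((a - b) ^ ((1 : ℝ) / 4) * p.1) * F p) :
    -- polar form: the components are `−r̃ sin φ · L_N¹(r̃²) e^{−r̃²/2}` and
    -- `r̃ cos φ · L_N¹(r̃²) e^{−r̃²/2}` with `r̃ = (a−b)^{1/4} ρ`
    (∀ ρ : ℝ, 0 ≤ ρ → ∀ φ : ℝ,
      f (ρ * Real.cos φ, ρ * Real.sin φ) =
        -((a - b) ^ ((1 : ℝ) / 4) * ρ) * Real.sin φ *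
          (lagOne N (((a - b) ^ ((1 : ℝ) / 4) * ρ) ^ 2) *
            Real.exp (-(((a - b) ^ ((1 : ℝ) / 4) * ρ) ^ 2) / 2)) ∧
      g (ρ * Real.cos φ, ρ * Real.sin φ) =
        ((a - b) ^ ((1 : ℝ) / 4) * ρ) * Real.cos φ *
          (lagOne N (((a - b) ^ ((1 : ℝ) / 4) * ρ) ^ 2) *
            Real.exp (-(((a - b) ^ ((1 : ℝ) / 4) * ρ) ^ 2) / 2))) ∧
    -- the pair is square integrable
    MemLp f 2 (volume : Measure (ℝ × ℝ)) ∧ MemLp g 2 (volume : Measure (ℝ × ℝ)) ∧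
    -- and satisfies the eigenvalue equation `ℍ₂ Ψ = (2N+2)√(a−b) Ψ` pointwise
    ∀ p : ℝ × ℝ,
      (-(1 / 2) * lap2R f p +
          ((a + b) / 2 * p.1 ^ 2 + (a - b) / 2 * p.2 ^ 2) * f p + b * p.1 * p.2 * g p =
        (2 * N + 2) * Real.sqrt (a - b) * f p) ∧
      (-(1 / 2) * lap2R g p + b * p.1 * p.2 * f p +
          ((a - b) / 2 * p.1 ^ 2 + (a + b) / 2 * p.2 ^ 2) * g p =
        (2 * N + 2) * Real.sqrt (a - b) * g p) := by
  have hab : 0 < a - b := by rw [hbdef]; nlinarith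
  set ω := Real.sqrt (a - b) with hω
  set c := (a - b) ^ ((1 : ℝ) / 4)
  have hω0 : 0 < ω := Real.sqrt_pos.2 hab
  have hω2 : ω ^ 2 = a - b := Real.sq_sqrt hab.le
  have hc2 : c ^ 2 = ω := by
    rw [← Real.rpow_natCast, ← Real.rpow_mul hab.le, hω, Real.sqrt_eq_rpow]
    norm_num
  have hfeq : f = fun q => -c * q.2 * lagFun N (ω * (q.1 ^ 2 + q.2 ^ 2)) := by
    subst hf hF
    simp only [lagFun, neg_div, neg_mul]
  have hgeq : g = fun q => c * q.1 * lagFun N (ω * (q.1 ^ 2 + q.2 ^ 2)) := by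
    subst hg hF
    simp only [lagFun, neg_div]
  refine ⟨fun ρ _ φ => ?_,
    hfeq ▸ memLp_mul_lagFun_radial N hω0 _ continuous_snd
      fun p => le_add_of_nonneg_left (sq_nonneg p.1),
    hgeq ▸ memLp_mul_lagFun_radial N hω0 _ continuous_fst
      fun p => le_add_of_nonneg_right (sq_nonneg p.2),
    fun p => ?_⟩
  · have hpolar : ω * ((ρ * Real.cos φ) ^ 2 + (ρ * Real.sin φ) ^ 2) = (c * ρ) ^ 2 := by
      linear_combination ω * ρ ^ 2 * Real.sin_sq_add_cos_sq φ - ρ ^ 2 * hc2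
    simp only [hfeq, hgeq, hpolar, lagFun, neg_div]
    constructor <;> ring
  · have hode := lagFun_ode N (ω * (p.1 ^ 2 + p.2 ^ 2))
    rw [hfeq, hgeq, lap2R_mul_snd_comp_radial _ _ (hasDerivAt_lagFun N) (hasDerivAt_lagFunDeriv N),
      lap2R_mul_fst_comp_radial _ _ (hasDerivAt_lagFun N) (hasDerivAt_lagFunDeriv N)]
    constructor
    · linear_combination -(c * p.2 * ω) * hode +
        c * p.2 * lagFun N (ω * (p.1 ^ 2 + p.2 ^ 2)) * (p.1 ^ 2 + p.2 ^ 2) / 2 * hω2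
    · linear_combination c * p.1 * ω * hode -
        c * p.1 * lagFun N (ω * (p.1 ^ 2 + p.2 ^ 2)) * (p.1 ^ 2 + p.2 ^ 2) / 2 * hω2

/-- The `l = 0` eigenfunctions of the Renner--Teller leading order Hamiltonian `ℍ₂`
built from the `√(a-b)` oscillator: for `a > 0`, `b̃ ∈ (0,1)`, `b = b̃ a`, the function
`Ψ_N(ρ,φ) = (−r̃ sin φ · L_N¹(r̃²) e^{−r̃²/2}, r̃ cos φ · L_N¹(r̃²) e^{−r̃²/2})`,
`r̃ = (a−b)^{1/4} ρ`, is an eigenfunction of `ℍ₂` with eigenvalue `(2N+2)√(a−b)`. -/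
theorem renner_l0_minus_eigenfunctions (a btil : ℝ) (ha : 0 < a)
    (hb0 : 0 < btil) (hb1 : btil < 1) (b : ℝ) (hbdef : b = btil * a) (N : ℕ)
    (F f g : ℝ × ℝ → ℝ)
    (hF : F = fun p : ℝ × ℝ =>
      lagOne N (Real.sqrt (a - b) * (p.1 ^ 2 + p.2 ^ 2)) *
        Real.exp (-(Real.sqrt (a - b) * (p.1 ^ 2 + p.2 ^ 2)) / 2))
    (hf : f = fun p : ℝ × ℝ => -((a - b) ^ ((1 : ℝ) / 4) * p.2) * F p)
    (hg : g = fun p : ℝ × ℝ => ((a - b) ^ ((1 : ℝ) / 4) * p.1) * F p) :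
    -- polar form: the components are `−r̃ sin φ · L_N¹(r̃²) e^{−r̃²/2}` and
    -- `r̃ cos φ · L_N¹(r̃²) e^{−r̃²/2}` with `r̃ = (a−b)^{1/4} ρ`
    (∀ ρ : ℝ, 0 ≤ ρ → ∀ φ : ℝ,
      f (ρ * Real.cos φ, ρ * Real.sin φ) =
        -((a - b) ^ ((1 : ℝ) / 4) * ρ) * Real.sin φ *
          (lagOne N (((a - b) ^ ((1 : ℝ) / 4) * ρ) ^ 2) *
            Real.exp (-(((a - b) ^ ((1 : ℝ) / 4) * ρ) ^ 2) / 2)) ∧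
      g (ρ * Real.cos φ, ρ * Real.sin φ) =
        ((a - b) ^ ((1 : ℝ) / 4) * ρ) * Real.cos φ *
          (lagOne N (((a - b) ^ ((1 : ℝ) / 4) * ρ) ^ 2) *
            Real.exp (-(((a - b) ^ ((1 : ℝ) / 4) * ρ) ^ 2) / 2))) ∧
    -- the pair is square integrable
    MemLp f 2 (volume : Measure (ℝ × ℝ)) ∧ MemLp g 2 (volume : Measure (ℝ × ℝ)) ∧
    -- and satisfies the eigenvalue equation `ℍ₂ Ψ = (2N+2)√(a−b) Ψ` pointwise
    ∀ p : ℝ × ℝ,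
      (-(1 / 2) * lap2R f p +
          ((a + b) / 2 * p.1 ^ 2 + (a - b) / 2 * p.2 ^ 2) * f p + b * p.1 * p.2 * g p =
        (2 * N + 2) * Real.sqrt (a - b) * f p) ∧
      (-(1 / 2) * lap2R g p + b * p.1 * p.2 * f p +
          ((a - b) / 2 * p.1 ^ 2 + (a + b) / 2 * p.2 ^ 2) * g p =
        (2 * N + 2) * Real.sqrt (a - b) * g p) :=
  renner_l0_minus_eigenfunctions_general a btil ha hb1 b hbdef N F f g hF hf hg
end

section
/- Fix a > b > 0. For each N ∈ ℕ, the function Ψ_{N}(ρ,φ) = (r̃ cos φ · L_N¹(r̃²) e^{−r̃²/2}, r̃ sin φ · L_N¹(r̃²) e^{−r̃²/2}) with r̃ = (a+b)^{1/4} ρ is an eigenfunction of ℍ₂ with eigenvalue (2N+2)√(a+b). -/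
/-!
The potential matrix sends `(x, y) R(x² + y²)` to `(a + b)/2 · (x² + y²) · (x, y) R(x² + y²)`,
so both components reduce to the scalar isotropic oscillator of frequency `w = √(a + b)` acting on
`x R(x² + y²)`. The Laplacian of `x R(r²)` is `x (8 R'(r²) + 4 r² R''(r²))`, and for
`R(s) = A(w s) e^{-w s / 2}` the eigenvalue equation becomes, in `t = w s`, the Laguerre equation
`t A'' + (2 - t) A' + N A = 0`, which `L_N¹` satisfies by a two-term recurrence of its
coefficients.
Square integrability is polynomial-times-Gaussian decay.
-/

open MeasureTheory

open Polynomial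

/-- `C(N+1, N-j)` is written as `C(N+1, j+1)`, which vanishes for `j > N`, so the coefficient
formula `coeff_lagPoly` holds for every index. -/
noncomputable def lagPoly (N : ℕ) : ℝ[X] :=
  ∑ j ∈ Finset.range (N + 1),
    C ((-1 : ℝ) ^ j * (Nat.choose (N + 1) (j + 1) : ℝ) / (Nat.factorial j : ℝ)) * X ^ j

theorem eval_lagPoly (N : ℕ) (x : ℝ) : (lagPoly N).eval x = lagOne N x := by
  rw [lagPoly, lagOne, eval_finsetSum]
  refine Finset.sum_congr rfl fun j hj => ?_
  have hjN := Finset.mem_range.1 hj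
  rw [Nat.choose_symm_of_eq_add (by omega : N + 1 = (j + 1) + (N - j))]
  simp only [eval_mul, eval_C, eval_pow, eval_X]
  ring

theorem coeff_lagPoly (N k : ℕ) :
    (lagPoly N).coeff k =
      (-1 : ℝ) ^ k * (Nat.choose (N + 1) (k + 1) : ℝ) / (Nat.factorial k : ℝ) := by
  simp only [lagPoly, finsetSum_coeff, coeff_C_mul_X_pow]
  rw [Finset.sum_ite_eq]
  split_ifs with hk
  · rfl
  · rw [Nat.choose_eq_zero_of_lt (by simp at hk; omega)]
    simp

theorem lagPoly_coeff_recurrence (N k : ℕ) :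
    ((k : ℝ) + 1) * ((k : ℝ) + 2) * (lagPoly N).coeff (k + 1) +
      ((N : ℝ) - k) * (lagPoly N).coeff k = 0 := by
  rcases le_or_gt k N with hk | hk
  · have key : (Nat.choose (N + 1) (k + 2) : ℝ) * ((k : ℝ) + 2) =
        (Nat.choose (N + 1) (k + 1) : ℝ) * ((N : ℝ) - k) := by
      have h := Nat.choose_succ_right_eq (N + 1) (k + 1)
      rw [show N + 1 - (k + 1) = N - k by omega] at h
      rw [← Nat.cast_sub hk]
      exact_mod_cast h
    rw [coeff_lagPoly, coeff_lagPoly, Nat.factorial_succ, pow_succ]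
    push_cast
    field_simp
    linear_combination (-(-1 : ℝ) ^ k) * key
  · rw [coeff_lagPoly, coeff_lagPoly, Nat.choose_eq_zero_of_lt (by omega : N + 1 < k + 1),
      Nat.choose_eq_zero_of_lt (by omega : N + 1 < k + 1 + 1)]
    simp

theorem lagPoly_laguerre_ode (N : ℕ) :
    X * derivative (derivative (lagPoly N)) + (C 2 - X) * derivative (lagPoly N) +
      C (N : ℝ) * lagPoly N = 0 := by
  ext k
  have hrec := lagPoly_coeff_recurrence N k
  cases k with
  | zero =>
    simp only [coeff_add, sub_mul, coeff_sub, mul_coeff_zero, coeff_X_zero, coeff_C_zero,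
      coeff_derivative, coeff_zero]
    push_cast at hrec ⊢
    linarith
  | succ m =>
    simp only [coeff_add, sub_mul, coeff_sub, coeff_X_mul, coeff_C_mul, coeff_derivative,
      coeff_zero]
    push_cast at hrec ⊢
    linarith

open Real

noncomputable def polyGauss (w : ℝ) (A : ℝ[X]) (s : ℝ) : ℝ :=
  A.eval (w * s) * exp (-(w * s) / 2)

noncomputable def polyGaussDeriv (w : ℝ) (A : ℝ[X]) : ℝ[X] :=
  w • derivative A - C (w / 2) * A

theorem hasDerivAt_polyGauss (w : ℝ) (A : ℝ[X]) (s : ℝ) :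
    HasDerivAt (polyGauss w A) (polyGauss w (polyGaussDeriv w A) s) s := by
  have hlin : HasDerivAt (fun s : ℝ => w * s) w s := by
    simpa using (hasDerivAt_id s).const_mul w
  have hexp : HasDerivAt (fun s : ℝ => exp (-(w * s) / 2)) (exp (-(w * s) / 2) * (-w / 2)) s :=
    (hlin.neg.div_const 2).exp
  refine (((A.hasDerivAt (w * s)).comp s hlin).mul hexp).congr_deriv ?_
  simp only [polyGauss, polyGaussDeriv, eval_sub, eval_smul, eval_mul, eval_C, smul_eq_mul,
    Function.comp_apply]
  ring

theorem continuous_polyGauss (w : ℝ) (A : ℝ[X]) : Continuous (polyGauss w A) :=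
  continuous_iff_continuousAt.2 fun s => (hasDerivAt_polyGauss w A s).continuousAt

/-- With `t = w s`, this is `2 w e^{-t/2}` times the Laguerre equation
`t A'' + (2 - t) A' + N A = 0` evaluated at `t`. -/
theorem polyGauss_radial_ode (w : ℝ) (N : ℕ) (A : ℝ[X])
    (hA : X * derivative (derivative A) + (C 2 - X) * derivative A + C (N : ℝ) * A = 0) (s : ℝ) :
    2 * s * polyGauss w (polyGaussDeriv w (polyGaussDeriv w A)) s +
        4 * polyGauss w (polyGaussDeriv w A) s =
      (w ^ 2 / 2 * s - (2 * N + 2) * w) * polyGauss w A s := by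
  have hode := congrArg (eval (w * s)) hA
  simp only [eval_add, eval_mul, eval_sub, eval_X, eval_C, eval_zero] at hode
  simp only [polyGauss, polyGaussDeriv, eval_sub, eval_smul, eval_mul, eval_C, smul_eq_mul,
    derivative_sub, derivative_smul, derivative_C_mul]
  linear_combination 2 * w * exp (-(w * s) / 2) * hode

theorem HasDerivAt.comp_sq_add {φ : ℝ → ℝ} {φ' k x : ℝ}
    (hφ : HasDerivAt φ φ' (x ^ 2 + k)) :
    HasDerivAt (fun u => φ (u ^ 2 + k)) (φ' * (2 * x)) x := by
  refine hφ.comp x ?_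
  simpa using (hasDerivAt_pow 2 x).add_const k

theorem HasDerivAt.comp_add_sq {φ : ℝ → ℝ} {φ' k x : ℝ}
    (hφ : HasDerivAt φ φ' (k + x ^ 2)) :
    HasDerivAt (fun u => φ (k + u ^ 2)) (φ' * (2 * x)) x := by
  simp only [add_comm k] at hφ ⊢
  exact hφ.comp_sq_add

noncomputable def radialMode (R : ℝ → ℝ) (q : ℝ × ℝ) : ℝ :=
  q.1 * R (q.1 ^ 2 + q.2 ^ 2)

theorem radialMode_swap (R : ℝ → ℝ) (p : ℝ × ℝ) :
    radialMode R p.swap = p.2 * R (p.1 ^ 2 + p.2 ^ 2) := by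
  rw [radialMode, Prod.fst_swap, Prod.snd_swap, add_comm]

section RadialLaplacian

variable {R R' R'' : ℝ → ℝ}

theorem lap2R_radialMode (hR : ∀ s, HasDerivAt R (R' s) s) (hR' : ∀ s, HasDerivAt R' (R'' s) s)
    (p : ℝ × ℝ) :
    lap2R (radialMode R) p =
      p.1 * (8 * R' (p.1 ^ 2 + p.2 ^ 2) + 4 * (p.1 ^ 2 + p.2 ^ 2) * R'' (p.1 ^ 2 + p.2 ^ 2)) := by
  obtain ⟨x, y⟩ := p
  have hx : ∀ u, HasDerivAt (fun u => u * R (u ^ 2 + y ^ 2))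
      (R (u ^ 2 + y ^ 2) + 2 * u ^ 2 * R' (u ^ 2 + y ^ 2)) u := fun u =>
    ((hasDerivAt_id u).mul (hR _).comp_sq_add).congr_deriv (by simp; ring)
  have hxx : HasDerivAt (fun u => R (u ^ 2 + y ^ 2) + 2 * u ^ 2 * R' (u ^ 2 + y ^ 2))
      (6 * x * R' (x ^ 2 + y ^ 2) + 4 * x ^ 3 * R'' (x ^ 2 + y ^ 2)) x :=
    ((hR _).comp_sq_add.add
      (((hasDerivAt_pow 2 x).const_mul 2).mul (hR' _).comp_sq_add)).congr_deriv (by ring)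
  have hy : ∀ u, HasDerivAt (fun u => x * R (x ^ 2 + u ^ 2))
      (x * (R' (x ^ 2 + u ^ 2) * (2 * u))) u := fun u =>
    (hR _).comp_add_sq.const_mul x
  have hyy : HasDerivAt (fun u => x * (R' (x ^ 2 + u ^ 2) * (2 * u)))
      (x * (2 * R' (x ^ 2 + y ^ 2) + 4 * y ^ 2 * R'' (x ^ 2 + y ^ 2))) y :=
    ((((hR' (x ^ 2 + y ^ 2)).comp_add_sq).mul ((hasDerivAt_id' y).const_mul 2)).const_mul
      x).congr_deriv (by ring)
  simp only [lap2R, radialMode, funext fun u => (hx u).deriv, funext fun u => (hy u).deriv,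
    hxx.deriv, hyy.deriv]
  ring

theorem oscillator_radialMode (hR : ∀ s, HasDerivAt R (R' s) s)
    (hR' : ∀ s, HasDerivAt R' (R'' s) s) {k E : ℝ}
    (hode : ∀ s, 2 * s * R'' s + 4 * R' s = (k / 2 * s - E) * R s) (p : ℝ × ℝ) :
    -(1 / 2) * lap2R (radialMode R) p + k / 2 * (p.1 ^ 2 + p.2 ^ 2) * radialMode R p =
      E * radialMode R p := by
  rw [lap2R_radialMode hR hR' p, radialMode]
  linear_combination (-p.1) * hode (p.1 ^ 2 + p.2 ^ 2)

end RadialLaplacian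

theorem lap2R_comp_swap_s14 (f : ℝ × ℝ → ℝ) (p : ℝ × ℝ) :
    lap2R (f ∘ Prod.swap) p = lap2R f p.swap :=
  add_comm _ _

theorem matrix_eigen_of_oscillator_radialMode {R : ℝ → ℝ} {a b E : ℝ}
    (heig : ∀ p : ℝ × ℝ, -(1 / 2) * lap2R (radialMode R) p +
      (a + b) / 2 * (p.1 ^ 2 + p.2 ^ 2) * radialMode R p = E * radialMode R p) (p : ℝ × ℝ) :
    (-(1 / 2) * lap2R (radialMode R) p +
          ((a + b) / 2 * p.1 ^ 2 + (a - b) / 2 * p.2 ^ 2) * radialMode R p +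
          b * p.1 * p.2 * (radialMode R ∘ Prod.swap) p =
        E * radialMode R p) ∧
      (-(1 / 2) * lap2R (radialMode R ∘ Prod.swap) p + b * p.1 * p.2 * radialMode R p +
          ((a - b) / 2 * p.1 ^ 2 + (a + b) / 2 * p.2 ^ 2) * (radialMode R ∘ Prod.swap) p =
        E * (radialMode R ∘ Prod.swap) p) := by
  have hp : radialMode R p = p.1 * R (p.1 ^ 2 + p.2 ^ 2) := rfl
  have heig_p := heig p
  have heig_swap := heig p.swap
  rw [hp] at heig_p
  rw [radialMode_swap, Prod.fst_swap, Prod.snd_swap] at heig_swap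
  rw [lap2R_comp_swap_s14, Function.comp_apply, radialMode_swap, hp]
  constructor
  · linear_combination heig_p
  · linear_combination heig_swap

open Filter Set

theorem Continuous.bddAbove_image_Ici_of_tendsto {φ : ℝ → ℝ} {l : ℝ} (hφ : Continuous φ)
    (hlim : Tendsto φ atTop (nhds l)) (a : ℝ) : BddAbove (φ '' Ici a) := by
  obtain ⟨M, hM⟩ := eventually_atTop.1 (hlim.eventually (gt_mem_nhds (lt_add_one l)))
  have hsplit : Ici a ⊆ Icc a M ∪ Ici M := fun s hs =>
    (le_total s M).imp (fun h => ⟨hs, h⟩) id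
  refine BddAbove.mono (image_mono hsplit) ?_
  rw [image_union]
  exact (isCompact_Icc.bddAbove_image hφ.continuousOn).union
    ⟨l + 1, forall_mem_image.2 fun s hs => (hM s hs).le⟩

theorem Polynomial.bddAbove_eval_mul_exp_neg (A : ℝ[X]) {k : ℝ} (hk : 0 < k) :
    BddAbove ((fun s => A.eval s * exp (-(k * s))) '' Ici 0) := by
  refine Continuous.bddAbove_image_Ici_of_tendsto (l := 0) (by fun_prop) ?_ 0
  have hlim := (A.comp (C k⁻¹ * X)).tendsto_div_exp_atTop.comp (tendsto_id.const_mul_atTop hk)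
  refine hlim.congr fun s => ?_
  simp only [Function.comp_apply, id, eval_comp, eval_mul, eval_C, eval_X,
    inv_mul_cancel_left₀ hk.ne', exp_neg, div_eq_mul_inv]

theorem memLp_radialMode_polyGauss {w : ℝ} (hw : 0 < w) (A : ℝ[X]) :
    MemLp (radialMode (polyGauss w A)) 2 volume := by
  have hw2 : 0 < w / 2 := half_pos hw
  obtain ⟨K, hK⟩ := (X * (A.comp (C w * X)) ^ 2).bddAbove_eval_mul_exp_neg hw2
  have hdecay : ∀ s, 0 ≤ s → s * polyGauss w A s ^ 2 ≤ K * exp (-(w / 2 * s)) := by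
    intro s hs
    have hKs := hK (mem_image_of_mem _ (mem_Ici.2 hs))
    simp only [eval_mul, eval_pow, eval_comp, eval_C, eval_X] at hKs
    calc s * polyGauss w A s ^ 2
        = s * A.eval (w * s) ^ 2 * exp (-(w / 2 * s)) * exp (-(w / 2 * s)) := by
          rw [polyGauss, mul_pow, ← exp_nat_mul, mul_assoc _ (exp _), ← exp_add]
          ring_nf
      _ ≤ K * exp (-(w / 2 * s)) := by gcongr
  have hgauss : Integrable fun q : ℝ × ℝ =>
      K * (exp (-(w / 2) * q.1 ^ 2) * exp (-(w / 2) * q.2 ^ 2)) := by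
    rw [Measure.volume_eq_prod]
    exact ((integrable_exp_neg_mul_sq hw2).mul_prod (integrable_exp_neg_mul_sq hw2)).const_mul K
  have hcont : Continuous (radialMode (polyGauss w A)) :=
    continuous_fst.mul ((continuous_polyGauss w A).comp (by fun_prop))
  refine (memLp_two_iff_integrable_sq hcont.aestronglyMeasurable).2 <|
    hgauss.mono' (hcont.pow 2).aestronglyMeasurable (ae_of_all _ fun q => ?_)
  have hr : 0 ≤ q.1 ^ 2 + q.2 ^ 2 := by positivity
  rw [Real.norm_of_nonneg (sq_nonneg _)]
  calc radialMode (polyGauss w A) q ^ 2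
      ≤ (q.1 ^ 2 + q.2 ^ 2) * polyGauss w A (q.1 ^ 2 + q.2 ^ 2) ^ 2 := by
        rw [radialMode, mul_pow]; gcongr; nlinarith [sq_nonneg q.2]
    _ ≤ K * exp (-(w / 2 * (q.1 ^ 2 + q.2 ^ 2))) := hdecay _ hr
    _ = K * (exp (-(w / 2) * q.1 ^ 2) * exp (-(w / 2) * q.2 ^ 2)) := by
        rw [← exp_add]; ring_nf

theorem sq_rpow_one_div_four {x : ℝ} (hx : 0 ≤ x) : (x ^ ((1 : ℝ) / 4)) ^ 2 = √x := by
  rw [← rpow_natCast, ← rpow_mul hx, sqrt_eq_rpow]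
  norm_num

/-- The `l = 0` eigenfunctions of the Renner--Teller leading order Hamiltonian `ℍ₂`
built from the `√(a+b)` oscillator: for `a > b > 0` the function
`Ψ_N(ρ,φ) = (r̃ cos φ · L_N¹(r̃²) e^{−r̃²/2}, r̃ sin φ · L_N¹(r̃²) e^{−r̃²/2})`,
`r̃ = (a+b)^{1/4} ρ`, is an eigenfunction of `ℍ₂` with eigenvalue `(2N+2)√(a+b)`. -/
theorem renner_l0_plus_eigenfunctions (a b : ℝ) (hb0 : 0 < b) (hab : b < a) (N : ℕ)
    (F f g : ℝ × ℝ → ℝ)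
    (hF : F = fun p : ℝ × ℝ =>
      lagOne N (Real.sqrt (a + b) * (p.1 ^ 2 + p.2 ^ 2)) *
        Real.exp (-(Real.sqrt (a + b) * (p.1 ^ 2 + p.2 ^ 2)) / 2))
    (hf : f = fun p : ℝ × ℝ => ((a + b) ^ ((1 : ℝ) / 4) * p.1) * F p)
    (hg : g = fun p : ℝ × ℝ => ((a + b) ^ ((1 : ℝ) / 4) * p.2) * F p) :
    -- polar form: the components are `r̃ cos φ · L_N¹(r̃²) e^{−r̃²/2}` and
    -- `r̃ sin φ · L_N¹(r̃²) e^{−r̃²/2}` with `r̃ = (a+b)^{1/4} ρ`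
    (∀ ρ : ℝ, 0 ≤ ρ → ∀ φ : ℝ,
      f (ρ * Real.cos φ, ρ * Real.sin φ) =
        ((a + b) ^ ((1 : ℝ) / 4) * ρ) * Real.cos φ *
          (lagOne N (((a + b) ^ ((1 : ℝ) / 4) * ρ) ^ 2) *
            Real.exp (-(((a + b) ^ ((1 : ℝ) / 4) * ρ) ^ 2) / 2)) ∧
      g (ρ * Real.cos φ, ρ * Real.sin φ) =
        ((a + b) ^ ((1 : ℝ) / 4) * ρ) * Real.sin φ *
          (lagOne N (((a + b) ^ ((1 : ℝ) / 4) * ρ) ^ 2) *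
            Real.exp (-(((a + b) ^ ((1 : ℝ) / 4) * ρ) ^ 2) / 2))) ∧
    -- the pair is square integrable
    MemLp f 2 (volume : Measure (ℝ × ℝ)) ∧ MemLp g 2 (volume : Measure (ℝ × ℝ)) ∧
    -- and satisfies the eigenvalue equation `ℍ₂ Ψ = (2N+2)√(a+b) Ψ` pointwise
    ∀ p : ℝ × ℝ,
      (-(1 / 2) * lap2R f p +
          ((a + b) / 2 * p.1 ^ 2 + (a - b) / 2 * p.2 ^ 2) * f p + b * p.1 * p.2 * g p =
        (2 * N + 2) * Real.sqrt (a + b) * f p) ∧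
      (-(1 / 2) * lap2R g p + b * p.1 * p.2 * f p +
          ((a - b) / 2 * p.1 ^ 2 + (a + b) / 2 * p.2 ^ 2) * g p =
        (2 * N + 2) * Real.sqrt (a + b) * g p) := by
  have hab0 : 0 < a + b := by linarith
  set w := Real.sqrt (a + b)
  set c := (a + b) ^ ((1 : ℝ) / 4)
  have hw : 0 < w := Real.sqrt_pos.2 hab0
  have hw2 : w ^ 2 = a + b := Real.sq_sqrt hab0.le
  set A := C c * lagPoly N
  have hA : X * derivative (derivative A) + (C 2 - X) * derivative A + C (N : ℝ) * A = 0 := by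
    simp only [A, derivative_C_mul]
    linear_combination C c * lagPoly_laguerre_ode N
  have hf' : f = radialMode (polyGauss w A) := by
    funext q; simp only [hf, hF, radialMode, polyGauss, A, eval_mul, eval_C, eval_lagPoly]; ring
  have hg' : g = radialMode (polyGauss w A) ∘ Prod.swap := by
    funext q
    simp only [hg, hF, Function.comp_apply, radialMode_swap, polyGauss, A, eval_mul, eval_C,
      eval_lagPoly]
    ring
  have heig := oscillator_radialMode (hasDerivAt_polyGauss w A)
    (hasDerivAt_polyGauss w (polyGaussDeriv w A))
    (by simpa only [hw2] using polyGauss_radial_ode w N A hA)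
  refine ⟨fun ρ _ φ => ?_, hf' ▸ memLp_radialMode_polyGauss hw A,
    hg' ▸ (memLp_radialMode_polyGauss hw A).comp_measurePreserving Measure.measurePreserving_swap,
    fun p => hf' ▸ hg' ▸ matrix_eigen_of_oscillator_radialMode heig p⟩
  have hr : (ρ * Real.cos φ) ^ 2 + (ρ * Real.sin φ) ^ 2 = ρ ^ 2 := by
    linear_combination ρ ^ 2 * Real.cos_sq_add_sin_sq φ
  have hcρ : (c * ρ) ^ 2 = w * ρ ^ 2 := by rw [mul_pow, sq_rpow_one_div_four hab0.le]
  simp only [hf, hg, hF, hr, hcρ]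
  constructor <;> ring
end
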